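/- arXiv:1408.5932 — 5 statements merged into one kernel-verified Lean document; each statement's English description precedes it below -/
import Mathlib

section
/- Let $n,k,r$ be integers with $1 < k < n-1$ and $1 \le r < \lfloor n/k \rfloor$. Then the $r$-stable hypersimplex $\Delta_{n,k}^{stab(r)}$ equals the set of all $x = (x_1,\dots,x_n) \in \mathbb{R}^n$ satisfying $\sum_{i=1}^n x_i = k$, together with $x_\ell \ge 0$ for every $\ell \in [n]$ and $\sum_{i=\ell}^{\ell+r-1} x_i \le 1$ for every $\ell \in [n]$, where in the latter sums the indices are read modulo $n$ (i.e. the sum is over the $r$ cyclically consecutive coordinates $x_\ell, x_{\ell+1}, \dots, x_{\ell+r-1}$ with indices in $\mathbb{Z}/n\mathbb{Z}$). -/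
open Finset

/-- The index `ℓ + i` taken modulo `n`, as an element of `Fin n`. -/
def cycIdx {n : ℕ} (ℓ : Fin n) (i : ℕ) : Fin n :=
  ⟨(ℓ.val + i) % n, Nat.mod_lt _ ℓ.pos⟩

/-- The cyclic distance between `i` and `j` on the cycle with `n` vertices. -/
def cycDist {n : ℕ} (i j : Fin n) : ℕ :=
  min ((i.val + n - j.val) % n) ((j.val + n - i.val) % n)

/-- `I` is an `r`-stable `k`-subset of `[n]`: it has `k` elements, any two distinct
ones at cyclic distance at least `r`. -/
def IsStable (n k r : ℕ) (I : Finset (Fin n)) : Prop :=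
  I.card = k ∧ ∀ i ∈ I, ∀ j ∈ I, i ≠ j → r ≤ cycDist i j

/-- The characteristic vector of `I ⊆ [n]`. -/
def charVec {n : ℕ} (I : Finset (Fin n)) : Fin n → ℝ :=
  fun i => if i ∈ I then 1 else 0

/-- The `r`-stable `n,k`-hypersimplex: the convex hull of the characteristic vectors
of the `r`-stable `k`-subsets of `[n]`. -/
noncomputable def stabHS (n k r : ℕ) : Set (Fin n → ℝ) :=
  convexHull ℝ (charVec '' {I : Finset (Fin n) | IsStable n k r I})

/-- Sum of the `r` cyclically consecutive coordinates `x ℓ, x (ℓ+1), …, x (ℓ+r-1)`,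
indices modulo `n`. -/
def wSum {n : ℕ} (r : ℕ) (ℓ : Fin n) (x : Fin n → ℝ) : ℝ :=
  ∑ i ∈ Finset.range r, x (cycIdx ℓ i)

/-!
The polytope `P` cut out by the inequalities contains `charVec I` for every `r`-stable `I`,
since a window of `r ≤ n` consecutive positions meets `I` at most once. It is compact and
convex, so by Krein–Milman it suffices to show that its extreme points are such vectors.
For an extreme point `x` all cumulative sums `S m = x 0 + ⋯ + x (m - 1)` (indices mod `n`)
are integers: if `S m` has fractional part `θ ≠ 0`, the direction
`d j = [fract (S (j + 1)) = θ] - [fract (S j) = θ]` is nonzero, and `x ± ε • d` stays in `P`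
for small `ε`, because `d` vanishes where `x j = 0`, and sums to zero over the whole cycle
(as `S (m + n) = S m + k`) and over every window of sum `1` (whose end points have the same
fractional part). Hence `x` is a `0/1` vector, and the window inequalities force its
support to be `r`-stable.
-/

namespace StableHypersimplex

open Filter Topology Fin.NatCast

lemma eventually_le_add_mul {a b v : ℝ} (hab : b ≤ a) (hv : a = b → v = 0) :
    ∀ᶠ c in 𝓝 (0 : ℝ), b ≤ a + c * v := by
  rcases hab.eq_or_lt with rfl | hlt
  · simp [hv rfl]
  · have : Tendsto (fun c => a + c * v) (𝓝 0) (𝓝 a) :=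
      Continuous.tendsto' (by fun_prop) 0 a (by simp)
    exact (this.eventually (lt_mem_nhds hlt)).mono fun _ => le_of_lt

lemma eq_zero_of_mem_extremePoints {E : Type*} [AddCommGroup E] [Module ℝ E] {A : Set E}
    {x v : E} (hx : x ∈ A.extremePoints ℝ) (hv : ∀ᶠ c in 𝓝 (0 : ℝ), x + c • v ∈ A) : v = 0 := by
  have hneg : ∀ᶠ c in 𝓝 (0 : ℝ), x + (-c) • v ∈ A :=
    (continuous_neg.tendsto' (0 : ℝ) 0 neg_zero).eventually hv
  obtain ⟨c, ⟨hadd, hsub⟩, hc⟩ :=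
    (((hv.and hneg).filter_mono nhdsWithin_le_nhds).and (self_mem_nhdsWithin (s := {0}ᶜ))).exists
  rw [neg_smul, ← sub_eq_add_neg] at hsub
  have := (mem_extremePoints.1 hx).2 _ hsub _ hadd (mem_openSegment_sub_add x (c • v))
  exact (smul_eq_zero.1 (sub_eq_self.1 this.1)).resolve_left hc

def stabPolytope (n k r : ℕ) : Set (Fin n → ℝ) :=
  {x | (∑ i, x i) = (k : ℝ) ∧ ∀ ℓ : Fin n, 0 ≤ x ℓ ∧ wSum r ℓ x ≤ 1}

variable {n : ℕ}

lemma val_sub_eq_mod (i j : Fin n) : (j - i).val = (j.val + n - i.val) % n := by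
  rw [Fin.val_sub]
  congr 1
  omega

lemma cycIdx_zero (ℓ : Fin n) : cycIdx ℓ 0 = ℓ :=
  Fin.ext (Nat.mod_eq_of_lt ℓ.isLt)

lemma isLinearMap_wSum (r : ℕ) (ℓ : Fin n) : IsLinearMap ℝ (wSum r ℓ : (Fin n → ℝ) → ℝ) :=
  ⟨fun x y => by simp [wSum, sum_add_distrib], fun c x => by simp [wSum, mul_sum]⟩

lemma charVec_filter_eq_one {x : Fin n → ℝ} (hx : ∀ j, x j = 0 ∨ x j = 1) :
    charVec {j | x j = 1} = x := by
  funext j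
  rcases hx j with h | h <;> simp [charVec, h]

section Polytope

variable {k r : ℕ} {x : Fin n → ℝ}

lemma le_wSum (hx : ∀ ℓ, 0 ≤ x ℓ) (hr : 0 < r) (ℓ : Fin n) : x ℓ ≤ wSum r ℓ x := by
  simpa [wSum, cycIdx_zero] using
    single_le_sum (f := fun i => x (cycIdx ℓ i)) (fun i _ => hx _) (mem_range.2 hr)

lemma convex_stabPolytope : Convex ℝ (stabPolytope n k r) := by
  have hsum : IsLinearMap ℝ fun x : Fin n → ℝ => ∑ i, x i :=
    ⟨fun x y => sum_add_distrib, fun c x => by simp [mul_sum]⟩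
  simp only [stabPolytope, Set.ofPred_and, Set.ofPred_forall]
  exact (convex_hyperplane hsum _).inter (convex_iInter fun ℓ =>
    (convex_halfSpace_ge (LinearMap.proj ℓ).isLinear 0).inter
      (convex_halfSpace_le (isLinearMap_wSum r ℓ) 1))

lemma isCompact_stabPolytope (hr : 0 < r) : IsCompact (stabPolytope n k r) := by
  have hclosed : IsClosed (stabPolytope n k r) := by
    simp only [stabPolytope, Set.ofPred_and, Set.ofPred_forall]
    refine (isClosed_eq (by fun_prop) continuous_const).inter (isClosed_iInter fun ℓ =>
      (isClosed_le continuous_const (continuous_apply ℓ)).inter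
        (isClosed_le (by unfold wSum; fun_prop) continuous_const))
  refine (isCompact_univ_pi fun _ => isCompact_Icc (a := (0 : ℝ)) (b := 1)).of_isClosed_subset
    hclosed fun x hx => Set.mem_univ_pi.2 fun j => ⟨(hx.2 j).1, ?_⟩
  exact (le_wSum (fun ℓ => (hx.2 ℓ).1) hr j).trans (hx.2 j).2

lemma eventually_add_smul_mem_stabPolytope {d : Fin n → ℝ} (hx : x ∈ stabPolytope n k r)
    (hsum : ∑ i, d i = 0) (hzero : ∀ ℓ, x ℓ = 0 → d ℓ = 0)
    (htight : ∀ ℓ, wSum r ℓ x = 1 → wSum r ℓ d = 0) :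
    ∀ᶠ c in 𝓝 (0 : ℝ), x + c • d ∈ stabPolytope n k r := by
  simp only [stabPolytope, Set.mem_ofPred_eq, Pi.add_apply, Pi.smul_apply, smul_eq_mul,
    sum_add_distrib, ← mul_sum, hsum, mul_zero, add_zero, hx.1, true_and,
    (isLinearMap_wSum r _).map_add, (isLinearMap_wSum r _).map_smul]
  refine eventually_all.2 fun ℓ => (eventually_le_add_mul (hx.2 ℓ).1 (hzero ℓ)).and ?_
  filter_upwards [eventually_le_add_mul (sub_nonneg.2 (hx.2 ℓ).2) (v := -wSum r ℓ d)
    fun h => by rw [htight ℓ (by linarith), neg_zero]] with c hc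
  linarith

end Polytope

variable [NeZero n]

lemma cycIdx_eq_add (ℓ : Fin n) (c : ℕ) : cycIdx ℓ c = ℓ + (c : Fin n) :=
  Fin.ext (by simp [cycIdx, Fin.val_add])

lemma cycIdx_cycIdx (ℓ : Fin n) (a b : ℕ) : cycIdx (cycIdx ℓ a) b = cycIdx ℓ (a + b) := by
  simp [cycIdx_eq_add, add_assoc]

lemma cycIdx_ne_self (ℓ : Fin n) {c : ℕ} (hc0 : 0 < c) (hcn : c < n) : cycIdx ℓ c ≠ ℓ := by
  rw [cycIdx_eq_add, Ne, add_eq_left, Fin.natCast_eq_zero]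
  exact fun hdvd => (Nat.eq_zero_of_dvd_of_lt hdvd hcn).not_gt hc0

lemma cycIdx_val_sub (i j : Fin n) : cycIdx i (j - i).val = j := by
  simp [cycIdx_eq_add]

lemma cycDist_cycIdx_le (ℓ : Fin n) (c : ℕ) : cycDist ℓ (cycIdx ℓ c) ≤ c := by
  refine (min_le_right _ _).trans ?_
  rw [← val_sub_eq_mod, cycIdx_eq_add, add_sub_cancel_left, Fin.val_natCast]
  exact Nat.mod_le c n

section Stable

variable {k r : ℕ}

lemma eq_of_cycIdx_mem_of_isStable {I : Finset (Fin n)} (hI : IsStable n k r I)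
    (hrn : r ≤ n) (ℓ : Fin n) {a b : ℕ} (ha : a < r) (hb : b < r)
    (haI : cycIdx ℓ a ∈ I) (hbI : cycIdx ℓ b ∈ I) : a = b := by
  wlog hab : a ≤ b generalizing a b
  · exact (this hb ha hbI haI (le_of_not_ge hab)).symm
  by_contra hne
  have hcyc : cycIdx ℓ b = cycIdx (cycIdx ℓ a) (b - a) := by
    rw [cycIdx_cycIdx, Nat.add_sub_cancel' hab]
  have hdist := hI.2 _ haI _ hbI <| by
    rw [hcyc]
    exact (cycIdx_ne_self _ (by omega) (by omega)).symm
  have := hcyc ▸ cycDist_cycIdx_le (cycIdx ℓ a) (b - a)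
  omega

lemma charVec_mem_stabPolytope (hrn : r ≤ n) {I : Finset (Fin n)}
    (hI : IsStable n k r I) : charVec I ∈ stabPolytope n k r := by
  refine ⟨by simp [charVec, hI.1], fun ℓ => ⟨by unfold charVec; positivity, ?_⟩⟩
  have hwin : wSum r ℓ (charVec I) = #{i ∈ range r | cycIdx ℓ i ∈ I} := by
    simp [wSum, charVec, sum_boole]
  have hcard : #{i ∈ range r | cycIdx ℓ i ∈ I} ≤ 1 := by
    refine card_le_one.2 fun a ha b hb => ?_
    simp only [mem_filter, mem_range] at ha hb
    exact eq_of_cycIdx_mem_of_isStable hI hrn ℓ ha.1 hb.1 ha.2 hb.2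
  rw [hwin]
  exact_mod_cast hcard

lemma add_le_wSum {x : Fin n → ℝ} (hx : ∀ ℓ, 0 ≤ x ℓ) {i j : Fin n} (hij : i ≠ j)
    (hr : (j - i).val < r) : x i + x j ≤ wSum r i x := by
  have hsub : (j - i).val ≠ 0 := fun h => hij (by simpa [h, cycIdx_zero] using cycIdx_val_sub i j)
  have := sum_le_sum_of_subset_of_nonneg (f := fun t => x (cycIdx i t)) (s := {0, (j - i).val})
    (insert_subset (mem_range.2 (by omega)) (singleton_subset_iff.2 (mem_range.2 hr)))
    (fun t _ _ => hx _)
  rwa [sum_pair hsub.symm, cycIdx_zero, cycIdx_val_sub] at this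

lemma add_le_one_of_cycDist_lt {x : Fin n → ℝ} (hx : x ∈ stabPolytope n k r) {i j : Fin n}
    (hij : i ≠ j) (hd : cycDist i j < r) : x i + x j ≤ 1 := by
  have hx0 : ∀ ℓ, 0 ≤ x ℓ := fun ℓ => (hx.2 ℓ).1
  rcases min_lt_iff.1 hd with h | h
  · rw [← val_sub_eq_mod] at h
    linarith [add_le_wSum hx0 hij.symm h, (hx.2 j).2]
  · rw [← val_sub_eq_mod] at h
    linarith [add_le_wSum hx0 hij h, (hx.2 i).2]

end Stable

section CumSum

variable (x : Fin n → ℝ)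

def cumSum (m : ℕ) : ℝ := ∑ t ∈ range m, x t

lemma cumSum_zero : cumSum x 0 = 0 := sum_range_zero _

lemma cumSum_succ (m : ℕ) : cumSum x (m + 1) = cumSum x m + x m := sum_range_succ _ _

lemma wSum_eq_cumSum_sub (r : ℕ) (ℓ : Fin n) :
    wSum r ℓ x = cumSum x (ℓ + r) - cumSum x ℓ := by
  simp [cumSum, sum_range_add, wSum, cycIdx_eq_add]

lemma cumSum_add_self (m : ℕ) : cumSum x (m + n) = cumSum x m + ∑ i, x i := by
  rw [cumSum, sum_range_add, ← Fin.sum_univ_eq_sum_range (fun i => x ↑(m + i))]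
  congr 1
  exact Fintype.sum_equiv (Equiv.addLeft (m : Fin n)) _ _ fun i => by simp

variable (θ : ℝ)

noncomputable def fractIndicator (t : ℕ) : ℝ := if Int.fract (cumSum x t) = θ then 1 else 0

noncomputable def fractIndicatorDiff (j : Fin n) : ℝ :=
  fractIndicator x θ (j + 1) - fractIndicator x θ j

variable {x} {k : ℕ}

lemma periodic_fractIndicator (hsum : ∑ i, x i = k) :
    Function.Periodic (fractIndicator x θ) n := fun t => by
  simp only [fractIndicator, cumSum_add_self, hsum, Int.fract_add_natCast]

lemma fractIndicatorDiff_natCast (hsum : ∑ i, x i = k) (t : ℕ) :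
    fractIndicatorDiff x θ t = fractIndicator x θ (t + 1) - fractIndicator x θ t := by
  have hp := periodic_fractIndicator θ hsum
  have hp₁ : Function.Periodic (fun s => fractIndicator x θ (s + 1)) n := fun s => by
    simpa only [add_right_comm] using hp (s + 1)
  simp only [fractIndicatorDiff, Fin.val_natCast, hp.map_mod_nat]
  exact congrArg (· - _) (hp₁.map_mod_nat t)

lemma cumSum_fractIndicatorDiff (hsum : ∑ i, x i = k) (t : ℕ) :
    cumSum (fractIndicatorDiff x θ) t = fractIndicator x θ t - fractIndicator x θ 0 := by
  induction t with
  | zero => simp [cumSum_zero]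
  | succ t ih => rw [cumSum_succ, ih, fractIndicatorDiff_natCast θ hsum]; ring

lemma sum_fractIndicatorDiff (hsum : ∑ i, x i = k) : ∑ i, fractIndicatorDiff x θ i = 0 := by
  have := cumSum_add_self (fractIndicatorDiff x θ) 0
  rwa [zero_add, cumSum_zero, zero_add, cumSum_fractIndicatorDiff θ hsum,
    (periodic_fractIndicator θ hsum).eq, sub_self, eq_comm] at this

lemma fractIndicatorDiff_eq_zero {j : Fin n} (hxj : x j = 0) : fractIndicatorDiff x θ j = 0 := by
  simp [fractIndicatorDiff, fractIndicator, cumSum_succ, hxj]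

lemma wSum_fractIndicatorDiff_eq_zero {r : ℕ} {ℓ : Fin n} (hsum : ∑ i, x i = k)
    (ht : wSum r ℓ x = 1) :
    wSum r ℓ (fractIndicatorDiff x θ) = 0 := by
  have : cumSum x (ℓ + r) = cumSum x ℓ + 1 := by linarith [wSum_eq_cumSum_sub x r ℓ]
  simp [wSum_eq_cumSum_sub, cumSum_fractIndicatorDiff θ hsum, fractIndicator, this]

end CumSum

section ExtremePoints

variable {k r : ℕ} {x : Fin n → ℝ}

lemma fract_cumSum_eq_zero (hx : x ∈ (stabPolytope n k r).extremePoints ℝ) (m : ℕ) :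
    Int.fract (cumSum x m) = 0 := by
  by_contra hθ
  have hsum := hx.1.1
  have hd : fractIndicatorDiff x (Int.fract (cumSum x m)) = 0 :=
    eq_zero_of_mem_extremePoints hx (eventually_add_smul_mem_stabPolytope hx.1
      (sum_fractIndicatorDiff _ hsum) (fun _ => fractIndicatorDiff_eq_zero _)
      (fun _ => wSum_fractIndicatorDiff_eq_zero _ hsum))
  have := cumSum_fractIndicatorDiff (Int.fract (cumSum x m)) hsum m
  rw [hd, fractIndicator, fractIndicator, if_pos rfl, cumSum_zero, Int.fract_zero,
    if_neg (Ne.symm hθ)] at this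
  simp [cumSum] at this

lemma eq_zero_or_eq_one_of_mem_extremePoints (hr : 0 < r)
    (hx : x ∈ (stabPolytope n k r).extremePoints ℝ) (j : Fin n) : x j = 0 ∨ x j = 1 := by
  obtain ⟨z, hz⟩ := Int.fract_eq_fract.1
    ((fract_cumSum_eq_zero hx (j + 1)).trans (fract_cumSum_eq_zero hx j).symm)
  rw [cumSum_succ, Fin.cast_val_eq_self, add_sub_cancel_left] at hz
  have h0 : (0 : ℝ) ≤ z := hz ▸ (hx.1.2 j).1
  have h1 : (z : ℝ) ≤ 1 := hz ▸ (le_wSum (fun ℓ => (hx.1.2 ℓ).1) hr j).trans (hx.1.2 j).2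
  have : z = 0 ∨ z = 1 := by
    have : 0 ≤ z ∧ z ≤ 1 := ⟨by exact_mod_cast h0, by exact_mod_cast h1⟩
    omega
  rcases this with rfl | rfl <;> simp [hz]

lemma extremePoints_stabPolytope_subset (hr : 0 < r) :
    (stabPolytope n k r).extremePoints ℝ ⊆ charVec '' {I | IsStable n k r I} := by
  intro x hx
  have hxI := charVec_filter_eq_one (eq_zero_or_eq_one_of_mem_extremePoints hr hx)
  refine ⟨_, ⟨?_, fun i hi j hj hij => ?_⟩, hxI⟩
  · have := hx.1.1
    rw [← hxI] at this
    simpa [charVec] using this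
  · by_contra! hlt
    have := add_le_one_of_cycDist_lt hx.1 hij hlt
    simp only [mem_filter, mem_univ, true_and] at hi hj
    linarith

end ExtremePoints

theorem stabHS_eq_stabPolytope {k r : ℕ} (hr : 0 < r) (hrn : r ≤ n) :
    stabHS n k r = stabPolytope n k r := by
  refine (convexHull_min ?_ convex_stabPolytope).antisymm ?_
  · rintro _ ⟨I, hI, rfl⟩
    exact charVec_mem_stabPolytope hrn hI
  calc stabPolytope n k r
      = closure (convexHull ℝ ((stabPolytope n k r).extremePoints ℝ)) :=
        (closure_convexHull_extremePoints (isCompact_stabPolytope hr) convex_stabPolytope).symm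
    _ ⊆ closure (stabHS n k r) :=
        closure_mono (convexHull_mono (extremePoints_stabPolytope_subset hr))
    _ = stabHS n k r := (((Set.toFinite _).image _).isClosed_convexHull ℝ).closure_eq

end StableHypersimplex

theorem stmt0_general (n k r : ℕ) (hr1 : 1 ≤ r) (hr2 : r < n / k) :
    stabHS n k r = {x : Fin n → ℝ | (∑ i, x i) = (k : ℝ) ∧
      ∀ ℓ : Fin n, 0 ≤ x ℓ ∧ wSum r ℓ x ≤ 1} := by
  have hrn : r ≤ n := hr2.le.trans (Nat.div_le_self n k)
  have : NeZero n := ⟨by omega⟩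
  exact StableHypersimplex.stabHS_eq_stabPolytope hr1 hrn

/-- Theorem, facets of the r-stable hypersimplex:
for `1 < k < n-1` and `1 ≤ r < ⌊n/k⌋`, the `r`-stable `n,k`-hypersimplex is exactly the
set of points of `ℝⁿ` with coordinate sum `k`, all coordinates nonnegative, and every
cyclic window of `r` consecutive coordinates summing to at most `1`. -/
theorem stmt0 (n k r : ℕ) (hk : 1 < k) (hkn : k < n - 1) (hr1 : 1 ≤ r) (hr2 : r < n / k) :
    stabHS n k r = {x : Fin n → ℝ | (∑ i, x i) = (k : ℝ) ∧
      ∀ ℓ : Fin n, 0 ≤ x ℓ ∧ wSum r ℓ x ≤ 1} :=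
  stmt0_general n k r hr1 hr2
end

section
/- Let $n,k,r$ be integers with $1 < k < n-1$ and $1 \le r < \lfloor n/k \rfloor$. Then for every $\ell \in [n]$, the hyperplane $\{x \in \mathbb{R}^n : x_\ell = 0\}$ is facet-defining for $\Delta_{n,k}^{stab(r)}$; that is, the set $\Delta_{n,k}^{stab(r)} \cap \{x : x_\ell = 0\}$ has affine dimension $n-2$ (equivalently, it contains $n-1$ affinely independent points). -/
/-!
Every point of the face satisfies `x ℓ = 0` and `∑ x = k`, so the direction of its affine span
lies in `{v | v ℓ = 0, ∑ v = 0}`, which has dimension `n - 2`. Conversely, that space is spanned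
by the differences of unit vectors `e (ℓ+a+1) - e (ℓ+a)` (indices mod `n`), `1 ≤ a ≤ n - 2`, and
each of them is a difference of characteristic vectors of two `r`-stable `k`-sets avoiding `ℓ`:
write `a = b + p r` with `1 ≤ b`, `p < k`, such that the progression `b, b + r, …, b + (k-1) r`
fits in `1, …, n-2` (this is where `k r + 2 ≤ n` enters). Raising its terms of index `≥ p`, resp.
`> p`, by one gives two `r`-stable sets (all gaps, including the one around `ℓ`, stay `≥ r`)
which differ only in containing `a + 1` instead of `a`.
-/

open Finset

section LinearAlgebra

variable {K ι : Type*} [Ring K] [Fintype ι]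

def evalSum (ℓ : ι) : (ι → K) →ₗ[K] K × K :=
  (LinearMap.proj ℓ).prod (∑ i, LinearMap.proj i)

@[simp]
lemma evalSum_apply (ℓ : ι) (x : ι → K) : evalSum ℓ x = (x ℓ, ∑ i, x i) := by
  simp [evalSum]

lemma evalSum_surjective [DecidableEq ι] {ℓ m : ι} (h : ℓ ≠ m) :
    Function.Surjective (evalSum (K := K) ℓ) := by
  rintro ⟨s, t⟩
  refine ⟨s • Pi.single ℓ 1 + (t - s) • Pi.single m 1, ?_⟩
  simp [Pi.single_apply, h, Finset.sum_add_distrib]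

lemma ker_evalSum_le [DecidableEq ι] {V : Submodule K (ι → K)} {ℓ m : ι}
    (hV : ∀ i ≠ ℓ, Pi.single i 1 - Pi.single m 1 ∈ V) : LinearMap.ker (evalSum ℓ) ≤ V := by
  intro v hv
  simp only [LinearMap.mem_ker, evalSum_apply, Prod.mk_eq_zero] at hv
  have hdecomp : v = ∑ i, v i • (Pi.single i 1 - Pi.single m 1) := by
    simp only [smul_sub, Finset.sum_sub_distrib, ← Finset.sum_smul, hv.2, zero_smul, sub_zero]
    exact pi_eq_sum_univ' v
  rw [hdecomp]
  refine Submodule.sum_mem _ fun i _ => ?_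
  by_cases hi : i = ℓ
  · simp [hi, hv.1]
  · exact Submodule.smul_mem _ _ (hV i hi)

end LinearAlgebra

lemma finrank_ker_evalSum {K ι : Type*} [DivisionRing K] [Fintype ι] [DecidableEq ι] {ℓ m : ι}
    (h : ℓ ≠ m) :
    Module.finrank K (LinearMap.ker (evalSum (K := K) ℓ)) = Fintype.card ι - 2 := by
  have := LinearMap.finrank_range_add_finrank_ker (evalSum (K := K) ℓ)
  rw [LinearMap.range_eq_top.mpr (evalSum_surjective h), finrank_top, Module.finrank_prod,
    Module.finrank_self, Module.finrank_fintype_fun_eq_card] at this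
  omega

lemma vectorSpan_le_ker_of_forall_eq {K V W : Type*} [Ring K] [AddCommGroup V] [Module K V]
    [AddCommGroup W] [Module K W] {f : V →ₗ[K] W} {S : Set V} {w : W}
    (hS : ∀ x ∈ S, f x = w) : vectorSpan K S ≤ LinearMap.ker f := by
  rw [vectorSpan_def, Submodule.span_le]
  rintro _ ⟨x, hx, y, hy, rfl⟩
  simp [hS x hx, hS y hy]

lemma cycDist_comm {n : ℕ} (i j : Fin n) : cycDist i j = cycDist j i :=
  Nat.min_comm _ _

section Cyclic

variable {n : ℕ} (ℓ : Fin n)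

lemma cycIdx_zero : cycIdx ℓ 0 = ℓ :=
  Fin.ext (by simp [cycIdx, Nat.mod_eq_of_lt ℓ.isLt])

lemma eq_of_cycIdx_eq {c d : ℕ} (hc : c < n) (hd : d < n) (h : cycIdx ℓ c = cycIdx ℓ d) :
    c = d := by
  have h' : c % n = d % n := Nat.ModEq.add_left_cancel' ℓ.val (congrArg Fin.val h)
  rwa [Nat.mod_eq_of_lt hc, Nat.mod_eq_of_lt hd] at h'

lemma cycIdx_ne_self {c : ℕ} (hc0 : 0 < c) (hcn : c < n) : cycIdx ℓ c ≠ ℓ := fun h => by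
  have := eq_of_cycIdx_eq ℓ hcn ℓ.pos (h.trans (cycIdx_zero ℓ).symm)
  omega

lemma exists_cycIdx_eq (i : Fin n) : ∃ c < n, cycIdx ℓ c = i := by
  refine ⟨(i + n - ℓ) % n, Nat.mod_lt _ ℓ.pos, Fin.ext ?_⟩
  have := ℓ.isLt
  simp only [cycIdx, Nat.add_mod_mod]
  rw [show ℓ.val + (i + n - ℓ) = i + n by omega, Nat.add_mod_right, Nat.mod_eq_of_lt i.isLt]

lemma le_cycDist_cycIdx {r c d : ℕ} (hcd : c + r ≤ d) (hdc : d + r ≤ c + n) :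
    r ≤ cycDist (cycIdx ℓ c) (cycIdx ℓ d) := by
  rcases Nat.eq_zero_or_pos r with rfl | hr
  · exact Nat.zero_le _
  set e := d - c
  have hx : (cycIdx ℓ c : ℕ) ≡ ℓ + c [MOD n] := Nat.mod_modEq _ _
  have hy : (cycIdx ℓ d : ℕ) ≡ ℓ + c + e [MOD n] := by
    rw [show ℓ.val + c + e = ℓ + d by omega]; exact Nat.mod_modEq _ _
  set x := (cycIdx ℓ c : ℕ)
  set y := (cycIdx ℓ d : ℕ)
  have hxn : x < n := (cycIdx ℓ c).isLt
  have hyn : y < n := (cycIdx ℓ d).isLt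
  have hfwd : (y + n - x) % n = e := by
    have : y + n - x + x ≡ e + x [MOD n] := by
      rw [show y + n - x + x = y + n by omega, add_comm e]
      exact Nat.add_modEq_right.trans (hy.trans (hx.symm.add_right e))
    exact Eq.trans (Nat.ModEq.add_right_cancel' x this) (Nat.mod_eq_of_lt (by omega : e < n))
  have hbwd : (x + n - y) % n = n - e := by
    have : x + n - y + y ≡ n - e + y [MOD n] := by
      rw [show x + n - y + y = x + n by omega]
      refine ((hx.add_right n).trans ?_).trans (hy.symm.add_left (n - e))
      rw [show ℓ.val + c + n = n - e + (ℓ + c + e) by omega]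
    exact Eq.trans (Nat.ModEq.add_right_cancel' y this) (Nat.mod_eq_of_lt (by omega : n - e < n))
  show r ≤ min ((x + n - y) % n) ((y + n - x) % n)
  rw [hfwd, hbwd]
  omega

end Cyclic

def bumpedAP (b r t i : ℕ) : ℕ :=
  b + i * r + if t ≤ i then 1 else 0

section BumpedAP

variable {b r t : ℕ}

lemma le_bumpedAP (i : ℕ) : b ≤ bumpedAP b r t i := by
  unfold bumpedAP
  omega

lemma bumpedAP_add_le {i j : ℕ} (hij : i < j) : bumpedAP b r t i + r ≤ bumpedAP b r t j := by
  have : i * r + r ≤ j * r := by nlinarith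
  unfold bumpedAP
  split_ifs <;> omega

lemma bumpedAP_le {k i : ℕ} (hi : i < k) : bumpedAP b r t i ≤ b + (k - 1) * r + 1 := by
  have : i * r ≤ (k - 1) * r := Nat.mul_le_mul_right _ (by omega)
  unfold bumpedAP
  split_ifs <;> omega

lemma bumpedAP_strictMono (hr : 1 ≤ r) : StrictMono (bumpedAP b r t) :=
  fun _ _ hij => by have := bumpedAP_add_le (b := b) (r := r) (t := t) hij; omega

lemma bumpedAP_of_ne {p i : ℕ} (hi : i ≠ p) : bumpedAP b r p i = bumpedAP b r (p + 1) i := by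
  unfold bumpedAP
  congr 1
  split_ifs <;> omega

end BumpedAP

def bumpedAPSet {n : ℕ} (ℓ : Fin n) (k b r t : ℕ) : Finset (Fin n) :=
  (range k).image fun i => cycIdx ℓ (bumpedAP b r t i)

section BumpedAPSet

variable {n k b r t : ℕ} (ℓ : Fin n)

lemma bumpedAPSet_injOn (hr : 1 ≤ r) (hfit : b + (k - 1) * r + 2 ≤ n) :
    Set.InjOn (fun i => cycIdx ℓ (bumpedAP b r t i)) (range k) := by
  intro i hi j hj hij
  simp only [coe_range, Set.mem_Iio] at hi hj
  have hi_le := bumpedAP_le (b := b) (r := r) (t := t) hi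
  have hj_le := bumpedAP_le (b := b) (r := r) (t := t) hj
  exact (bumpedAP_strictMono hr).injective (eq_of_cycIdx_eq ℓ (by omega) (by omega) hij)

lemma isStable_bumpedAPSet (hr : 1 ≤ r) (hfit : b + (k - 1) * r + 2 ≤ n) (hwrap : k * r + 1 ≤ n) :
    IsStable n k r (bumpedAPSet ℓ k b r t) := by
  refine ⟨by rw [bumpedAPSet, card_image_of_injOn (bumpedAPSet_injOn ℓ hr hfit), card_range], ?_⟩
  have hpair : ∀ i j, i < j → j < k →
      r ≤ cycDist (cycIdx ℓ (bumpedAP b r t i)) (cycIdx ℓ (bumpedAP b r t j)) := by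
    intro i j hij hj
    have hj_le := bumpedAP_le (b := b) (r := r) (t := t) hj
    have hi_ge := le_bumpedAP (b := b) (r := r) (t := t) i
    have hkr : (k - 1) * r + r = k * r := by
      rw [← Nat.succ_mul, Nat.succ_eq_add_one, Nat.sub_add_cancel (by omega)]
    exact le_cycDist_cycIdx ℓ (bumpedAP_add_le hij) (by omega)
  simp only [bumpedAPSet, mem_image, mem_range]
  rintro _ ⟨i, hi, rfl⟩ _ ⟨j, hj, rfl⟩ hne
  rcases lt_trichotomy i j with hij | rfl | hji
  · exact hpair i j hij hj
  · exact absurd rfl hne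
  · rw [cycDist_comm]
    exact hpair j i hji hi

lemma notMem_bumpedAPSet (hb : 1 ≤ b) (hfit : b + (k - 1) * r + 2 ≤ n) :
    ℓ ∉ bumpedAPSet ℓ k b r t := by
  simp only [bumpedAPSet, mem_image, mem_range, not_exists, not_and]
  intro i hi
  have hi_le := bumpedAP_le (b := b) (r := r) (t := t) hi
  have hi_ge := le_bumpedAP (b := b) (r := r) (t := t) i
  exact cycIdx_ne_self ℓ (by omega) (by omega)

end BumpedAPSet

lemma charVec_eq_sum {n : ℕ} (I : Finset (Fin n)) : charVec I = ∑ i ∈ I, Pi.single i 1 := by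
  ext j
  simp [charVec, Finset.sum_apply, Pi.single_apply]

lemma charVec_bumpedAPSet_sub {n k b r p : ℕ} (ℓ : Fin n) (hr : 1 ≤ r)
    (hfit : b + (k - 1) * r + 2 ≤ n) (hp : p < k) :
    charVec (bumpedAPSet ℓ k b r p) - charVec (bumpedAPSet ℓ k b r (p + 1)) =
      Pi.single (cycIdx ℓ (b + p * r + 1)) 1 - Pi.single (cycIdx ℓ (b + p * r)) 1 := by
  rw [charVec_eq_sum, charVec_eq_sum, bumpedAPSet, bumpedAPSet,
    sum_image (bumpedAPSet_injOn ℓ hr hfit), sum_image (bumpedAPSet_injOn ℓ hr hfit),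
    ← sum_sub_distrib, sum_eq_single_of_mem p (mem_range.mpr hp)]
  · simp [bumpedAP]
  · intro i _ hi
    rw [bumpedAP_of_ne hi, sub_self]

lemma exists_eq_add_mul {n k r a : ℕ} (hr : 1 ≤ r) (hk : 1 ≤ k) (hkr : k * r + 2 ≤ n)
    (ha : 1 ≤ a) (han : a + 2 ≤ n) :
    ∃ b p, p < k ∧ a = b + p * r ∧ 1 ≤ b ∧ b + (k - 1) * r + 2 ≤ n := by
  have hdiv : (a - 1) / r * r ≤ a - 1 := Nat.div_mul_le_self _ _
  by_cases hq : (a - 1) / r < k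
  · have hmod : a - 1 < (a - 1) / r * r + r := Nat.lt_div_mul_add hr
    have hkr' : (k - 1) * r + r = k * r := by
      rw [← Nat.succ_mul, Nat.succ_eq_add_one, Nat.sub_add_cancel hk]
    exact ⟨a - (a - 1) / r * r, (a - 1) / r, hq, by omega, by omega, by omega⟩
  · have hmul : (k - 1) * r ≤ (a - 1) / r * r := Nat.mul_le_mul_right _ (by omega)
    exact ⟨a - (k - 1) * r, k - 1, by omega, by omega, by omega, by omega⟩

lemma charVec_mem_stabHS_inter {n k r : ℕ} {ℓ : Fin n} {I : Finset (Fin n)}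
    (hI : IsStable n k r I) (hℓ : ℓ ∉ I) : charVec I ∈ stabHS n k r ∩ {x | x ℓ = 0} :=
  ⟨subset_convexHull ℝ _ ⟨I, hI, rfl⟩, by simp [charVec, hℓ]⟩

lemma single_succ_sub_single_mem_vectorSpan {n k r a : ℕ} (ℓ : Fin n) (hr : 1 ≤ r) (hk : 1 ≤ k)
    (hkr : k * r + 2 ≤ n) (ha : 1 ≤ a) (han : a + 2 ≤ n) :
    Pi.single (cycIdx ℓ (a + 1)) 1 - Pi.single (cycIdx ℓ a) 1 ∈
      vectorSpan ℝ (stabHS n k r ∩ {x | x ℓ = 0}) := by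
  obtain ⟨b, p, hp, rfl, hb, hfit⟩ := exists_eq_add_mul hr hk hkr ha han
  have hwrap : k * r + 1 ≤ n := by omega
  rw [← charVec_bumpedAPSet_sub ℓ hr hfit hp]
  exact vsub_mem_vectorSpan ℝ
    (charVec_mem_stabHS_inter (isStable_bumpedAPSet ℓ hr hfit hwrap) (notMem_bumpedAPSet ℓ hb hfit))
    (charVec_mem_stabHS_inter (isStable_bumpedAPSet ℓ hr hfit hwrap) (notMem_bumpedAPSet ℓ hb hfit))

lemma single_sub_single_mem_vectorSpan {n k r : ℕ} (ℓ : Fin n) (hr : 1 ≤ r) (hk : 1 ≤ k)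
    (hkr : k * r + 2 ≤ n) {i : Fin n} (hi : i ≠ ℓ) :
    Pi.single i 1 - Pi.single (cycIdx ℓ 1) 1 ∈ vectorSpan ℝ (stabHS n k r ∩ {x | x ℓ = 0}) := by
  obtain ⟨c, hc, rfl⟩ := exists_cycIdx_eq ℓ i
  have hc1 : 1 ≤ c := Nat.pos_of_ne_zero fun h => hi (by rw [h, cycIdx_zero])
  induction c, hc1 using Nat.le_induction with
  | base => simp
  | succ c hc1 ih =>
    rw [← sub_add_sub_cancel _ (Pi.single (cycIdx ℓ c) 1)]
    exact Submodule.add_mem _ (single_succ_sub_single_mem_vectorSpan ℓ hr hk hkr hc1 (by omega))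
      (ih (by omega) (cycIdx_ne_self ℓ (by omega) (by omega)))

lemma sum_eq_of_mem_stabHS {n k r : ℕ} {x : Fin n → ℝ} (hx : x ∈ stabHS n k r) :
    ∑ i, x i = k := by
  have hconv : Convex ℝ {y : Fin n → ℝ | ∑ i, y i = k} := by
    simpa [Set.preimage, Finset.sum_apply] using (convex_singleton (k : ℝ)).linear_preimage
      (∑ i : Fin n, LinearMap.proj (R := ℝ) (φ := fun _ => ℝ) i)
  refine convexHull_min ?_ hconv hx
  rintro _ ⟨I, hI, rfl⟩
  simp [charVec_eq_sum, Finset.sum_apply, hI.1]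

theorem stmt2_general (n k r : ℕ) (hk : 1 < k) (hr1 : 1 ≤ r) (hr2 : r < n / k)
    (ℓ : Fin n) :
    Module.finrank ℝ (affineSpan ℝ (stabHS n k r ∩ {x | x ℓ = 0})).direction = n - 2 := by
  have hkr : k * r + 2 ≤ n := by
    have := (Nat.le_div_iff_mul_le (by omega)).mp hr2
    nlinarith
  have hℓm : ℓ ≠ cycIdx ℓ 1 := (cycIdx_ne_self ℓ one_pos (by omega)).symm
  have hle : vectorSpan ℝ (stabHS n k r ∩ {x | x ℓ = 0}) ≤ LinearMap.ker (evalSum ℓ) :=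
    vectorSpan_le_ker_of_forall_eq (w := ((0 : ℝ), (k : ℝ))) fun x hx => by
      rw [evalSum_apply, hx.2, sum_eq_of_mem_stabHS hx.1]
  have hge := ker_evalSum_le fun i hi => single_sub_single_mem_vectorSpan ℓ hr1 hk.le hkr hi
  rw [direction_affineSpan, le_antisymm hle hge, finrank_ker_evalSum hℓm, Fintype.card_fin]

/-- for `1 < k < n-1`, `1 ≤ r < ⌊n/k⌋` and every `ℓ ∈ [n]`, the hyperplane
`{x : x ℓ = 0}` is facet-defining for the `r`-stable hypersimplex: the intersection has
affine dimension `n - 2`. -/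
theorem stmt2 (n k r : ℕ) (hk : 1 < k) (hkn : k < n - 1) (hr1 : 1 ≤ r) (hr2 : r < n / k)
    (ℓ : Fin n) :
    Module.finrank ℝ (affineSpan ℝ (stabHS n k r ∩ {x | x ℓ = 0})).direction = n - 2 :=
  stmt2_general n k r hk hr1 hr2 ℓ
end

section
/- Let $n,k,r$ be integers with $1 < k < n-1$, and suppose either $1 \le r < \lfloor n/k \rfloor$ or $n = kr+1$. Then for every $\ell \in [n]$ the flat $H_{\ell,r} = \{x \in \mathbb{R}^n : \sum_{i=\ell}^{\ell+r-1} x_i = 1,\ \sum_{i=1}^n x_i = k\}$ (indices modulo $n$) is facet-defining for $\Delta_{n,k}^{stab(r)}$; that is, the set $\Delta_{n,k}^{stab(r)} \cap H_{\ell,r}$ has affine dimension $n-2$ (it contains $n-1$ affinely independent points). -/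
open Finset

/-!
The two equations of `H_{ℓ,r}` are independent linear conditions (test them on `e_ℓ` and
`e_{ℓ+r}`), so the face has dimension at most `n - 2`. Conversely, measure positions from `ℓ`, so
that the window is `{0, …, r-1}`. For every `m ≤ n - 2` with `m ≠ r - 1` there is a set `Q` of
`k - 1` positions, an arithmetic progression of step `r` inside the arc of points at distance at
least `r` from both `m` and `m + 1`, such that `Q ∪ {m}` and `Q ∪ {m + 1}` are `r`-stable and each
meets the window exactly once; `kr + 1 ≤ n` is exactly what leaves room for `Q`. The two vertices
differ by `e_{ℓ+m+1} - e_{ℓ+m}`, and these `n - 2` differences are linearly independent: the sums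
of the coordinates at positions beyond `t` form a dual family.
-/

section CyclicPositions

variable {n : ℕ} (ℓ : Fin n)

lemma cycIdx_eq_cycIdx_iff_mod_eq {a b : ℕ} : cycIdx ℓ a = cycIdx ℓ b ↔ a % n = b % n := by
  rw [Fin.ext_iff]
  exact ⟨Nat.ModEq.add_left_cancel' _, Nat.ModEq.add_left _⟩

lemma cycIdx_add_self (a : ℕ) : cycIdx ℓ (a + n) = cycIdx ℓ a :=
  (cycIdx_eq_cycIdx_iff_mod_eq ℓ).2 (Nat.add_mod_right a n)

lemma cycIdx_injOn : Set.InjOn (cycIdx ℓ) (Set.Iio n) := fun a ha b hb h => by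
  rwa [cycIdx_eq_cycIdx_iff_mod_eq, Nat.mod_eq_of_lt ha, Nat.mod_eq_of_lt hb] at h

lemma cycIdx_sub_mod {a b : ℕ} (hab : a ≤ b) :
    ((cycIdx ℓ b).val + n - (cycIdx ℓ a).val) % n = (b - a) % n := by
  rw [← ZMod.natCast_eq_natCast_iff', Nat.cast_sub (by omega), Nat.cast_add, Nat.cast_sub hab]
  simp only [cycIdx, ZMod.natCast_mod, ZMod.natCast_self, Nat.cast_add]
  ring

lemma cycDist_cycIdx {a b : ℕ} (hab : a < b) (hba : b < a + n) :
    cycDist (cycIdx ℓ a) (cycIdx ℓ b) = min (a + n - b) (b - a) := by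
  unfold cycDist
  rw [← cycIdx_add_self ℓ a, cycIdx_sub_mod ℓ hba.le, cycIdx_add_self, cycIdx_sub_mod ℓ hab.le,
    Nat.mod_eq_of_lt (by omega), Nat.mod_eq_of_lt (by omega)]

lemma sum_single_cycIdx (s : Finset ℕ) (hs : ∀ j ∈ s, j < n) {a : ℕ} (ha : a < n) :
    ∑ j ∈ s, (Pi.single (cycIdx ℓ a) 1 : Fin n → ℝ) (cycIdx ℓ j) = if a ∈ s then 1 else 0 := by
  rw [← Finset.sum_ite_eq' s a (fun _ => (1 : ℝ))]
  refine Finset.sum_congr rfl fun j hj => ?_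
  simp only [Pi.single_apply, (cycIdx_injOn ℓ).eq_iff (hs j hj) ha, eq_comm]

end CyclicPositions

/-- A set of offsets on the `n`-cycle in which any two, `a < b`, are at distance at least `r` both
along `[a, b]` and around the rest of the cycle. -/
def IsCycSpaced (n r : ℕ) (P : Finset ℕ) : Prop :=
  ∀ a ∈ P, ∀ b ∈ P, a < b → a + r ≤ b ∧ b + r ≤ a + n

section Spaced

variable {n r : ℕ} {P : Finset ℕ}

lemma IsCycSpaced.insert (hP : IsCycSpaced n r P) {a : ℕ}
    (ha : ∀ q ∈ P, a + r ≤ q ∧ q + r ≤ a + n) : IsCycSpaced n r (insert a P) := by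
  intro b hb c hc hbc
  rcases Finset.mem_insert.1 hb with rfl | hbP <;> rcases Finset.mem_insert.1 hc with rfl | hcP
  · omega
  · exact ha c hcP
  · have := ha b hbP
    omega
  · exact hP b hbP c hcP hbc

lemma isCycSpaced_progression (s len : ℕ) (h : len * r ≤ n) :
    IsCycSpaced n r ((range len).image fun j => s + j * r) := by
  simp only [IsCycSpaced, Finset.mem_image, Finset.mem_range]
  rintro _ ⟨i, hi, rfl⟩ _ ⟨j, hj, rfl⟩ hij
  have hij : i + 1 ≤ j := Nat.lt_of_mul_lt_mul_right (Nat.lt_of_add_lt_add_left hij)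
  have h1 : (i + 1) * r ≤ j * r := Nat.mul_le_mul_right r hij
  have h2 : (j + 1) * r ≤ len * r := Nat.mul_le_mul_right r hj
  constructor <;> nlinarith

lemma exists_progression_mem_Ico {s N : ℕ} (hs : s < N + r) :
    ∀ len, N ≤ s + len * r → ∃ j ≤ len, N ≤ s + j * r ∧ s + j * r < N + r
  | 0, h => ⟨0, le_rfl, by simpa using h, by simpa using hs⟩
  | len + 1, h => by
    by_cases hlen : N ≤ s + len * r
    · obtain ⟨j, hj, hjN⟩ := exists_progression_mem_Ico hs len hlen
      exact ⟨j, hj.trans len.le_succ, hjN⟩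
    · exact ⟨len + 1, le_rfl, h, by rw [add_one_mul]; omega⟩

variable (ℓ : Fin n)

lemma IsCycSpaced.injOn_cycIdx (hP : IsCycSpaced n r P) (hr : 0 < r) :
    Set.InjOn (cycIdx ℓ) P := by
  intro a ha b hb hab
  by_contra hne
  wlog hlt : a < b generalizing a b
  · exact this hb ha hab.symm (Ne.symm hne) (by omega)
  have hdvd : n ∣ b - a := (Nat.modEq_iff_dvd' hlt.le).1 ((cycIdx_eq_cycIdx_iff_mod_eq ℓ).1 hab)
  have := hP a ha b hb hlt
  have := Nat.eq_zero_of_dvd_of_lt hdvd (by omega)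
  omega

lemma IsCycSpaced.isStable_image (hP : IsCycSpaced n r P) (hr : 0 < r) :
    IsStable n P.card r (P.image (cycIdx ℓ)) := by
  refine ⟨Finset.card_image_of_injOn (hP.injOn_cycIdx ℓ hr), ?_⟩
  simp only [Finset.mem_image]
  rintro _ ⟨a, ha, rfl⟩ _ ⟨b, hb, rfl⟩ hab
  have hne : a ≠ b := fun h => hab (h ▸ rfl)
  wlog hlt : a < b generalizing a b
  · rw [cycDist_comm]
    exact this b hb a ha (Ne.symm hab) hne.symm (by omega)
  have := hP a ha b hb hlt
  rw [cycDist_cycIdx ℓ hlt (by omega)]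
  omega

end Spaced

/-- Cyclic distance below `r` inside the window forces every `r`-spaced set to meet it at most
once. -/
lemma wSum_charVec_eq_one {n r : ℕ} (ℓ : Fin n) {I : Finset (Fin n)}
    (hI : ∀ i ∈ I, ∀ j ∈ I, i ≠ j → r ≤ cycDist i j) (hrn : r ≤ n) {w : ℕ} (hw : w < r)
    (hwI : cycIdx ℓ w ∈ I) : wSum r ℓ (charVec I) = 1 := by
  unfold wSum charVec
  rw [Finset.sum_eq_single_of_mem w (Finset.mem_range.2 hw), if_pos hwI]
  intro i hi hiw
  rw [Finset.mem_range] at hi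
  refine if_neg fun hiI => ?_
  have hne : cycIdx ℓ i ≠ cycIdx ℓ w :=
    fun h => hiw ((cycIdx_injOn ℓ).eq_iff (show i < n by omega) (show w < n by omega) |>.1 h)
  have hdist := hI _ hiI _ hwI hne
  rcases lt_or_gt_of_ne hiw with h | h
  · rw [cycDist_cycIdx ℓ h (by omega)] at hdist
    omega
  · rw [cycDist_comm, cycDist_cycIdx ℓ h (by omega)] at hdist
    omega

lemma sum_charVec {n : ℕ} (I : Finset (Fin n)) : ∑ i, charVec I i = I.card := by
  simp [charVec]

lemma charVec_insert {n : ℕ} {J : Finset (Fin n)} {a : Fin n} (ha : a ∉ J) :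
    charVec (insert a J) = Pi.single a 1 + charVec J := by
  ext i
  by_cases hi : i = a
  · subst hi
    simp [charVec, ha]
  · simp [charVec, hi]

noncomputable def stabFacet (n k r : ℕ) (ℓ : Fin n) : Set (Fin n → ℝ) :=
  stabHS n k r ∩ {x | wSum r ℓ x = 1 ∧ ∑ i, x i = (k : ℝ)}

section Vertices

variable {n k r : ℕ} (ℓ : Fin n)

lemma IsCycSpaced.charVec_image_mem_stabFacet {P : Finset ℕ} (hP : IsCycSpaced n r P)
    (hr : 0 < r) (hrn : r ≤ n) (hk : P.card = k) {w : ℕ} (hw : w < r)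
    (hwP : ∃ p ∈ P, cycIdx ℓ p = cycIdx ℓ w) :
    charVec (P.image (cycIdx ℓ)) ∈ stabFacet n k r ℓ := by
  have hstab := hP.isStable_image ℓ hr
  rw [hk] at hstab
  obtain ⟨p, hp, hpw⟩ := hwP
  refine ⟨subset_convexHull ℝ _ ⟨_, hstab, rfl⟩, wSum_charVec_eq_one ℓ hstab.2 hrn hw ?_, ?_⟩
  · exact hpw ▸ Finset.mem_image_of_mem _ hp
  · rw [sum_charVec, hstab.1]

lemma charVec_insert_mem_stabFacet {Q : Finset ℕ} (hQ : IsCycSpaced n r Q)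
    (hr : 0 < r) (hrn : r ≤ n) (hk : Q.card + 1 = k) {a : ℕ}
    (haQ : ∀ q ∈ Q, a + r ≤ q ∧ q + r ≤ a + n) {w : ℕ} (hw : w < r)
    (hwin : ∃ p ∈ insert a Q, cycIdx ℓ p = cycIdx ℓ w) :
    cycIdx ℓ a ∉ Q.image (cycIdx ℓ) ∧
      charVec (insert (cycIdx ℓ a) (Q.image (cycIdx ℓ))) ∈ stabFacet n k r ℓ := by
  have hP := hQ.insert haQ
  have ha : a ∉ Q := fun h => by
    have := haQ a h
    omega
  refine ⟨fun h => ha ?_, ?_⟩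
  · obtain ⟨q, hq, hqa⟩ := Finset.mem_image.1 h
    rwa [← hP.injOn_cycIdx ℓ hr (Finset.mem_insert_of_mem hq) (Finset.mem_insert_self a Q) hqa]
  · rw [← Finset.image_insert]
    exact hP.charVec_image_mem_stabFacet ℓ hr hrn (by rw [Finset.card_insert_of_notMem ha, hk])
      hw hwin

/-- The progression has to start at `m + 1 + r` or later and must reach position `n`, the first
return of the window. -/
lemma exists_window_progression {t m : ℕ} (hr : 0 < r) (hn : (t + 2) * r + 1 ≤ n)
    (hm : m + 1 < n) (hrm : r ≤ m) :
    ∃ s, m + 1 + r ≤ s ∧ s + t * r + r ≤ m + n ∧ ∃ j ≤ t, n ≤ s + j * r ∧ s + j * r < n + r := by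
  have ht : (t + 2) * r = t * r + 2 * r := by ring
  refine ⟨max (m + 1 + r) (n - t * r), by omega, by omega, ?_⟩
  exact exists_progression_mem_Ico (by omega) t (by omega)

lemma single_sub_single_mem_vectorSpan_stabFacet {t m : ℕ} (hr : 0 < r)
    (hn : (t + 2) * r + 1 ≤ n) (hm : m + 1 < n) (hmr : m + 1 ≠ r) :
    (Pi.single (cycIdx ℓ (m + 1)) 1 - Pi.single (cycIdx ℓ m) 1 : Fin n → ℝ) ∈
      vectorSpan ℝ (stabFacet n (t + 2) r ℓ) := by
  have ht : (t + 2) * r = t * r + 2 * r := by ring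
  obtain ⟨s, hs, hst, hwin⟩ : ∃ s, m + 1 + r ≤ s ∧ s + t * r + r ≤ m + n ∧
      (m + 1 < r ∨ ∃ j ≤ t, n ≤ s + j * r ∧ s + j * r < n + r) := by
    by_cases hmr' : m + 1 < r
    · exact ⟨m + 1 + r, le_rfl, by omega, Or.inl hmr'⟩
    · obtain ⟨s, hs, hst, hwin⟩ := exists_window_progression hr hn hm (by omega)
      exact ⟨s, hs, hst, Or.inr hwin⟩
  set Q := (range (t + 1)).image fun j => s + j * r
  have hQ : IsCycSpaced n r Q := isCycSpaced_progression s (t + 1) (by nlinarith)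
  have hQcard : Q.card + 1 = t + 2 := by
    rw [Finset.card_image_of_injective _ fun i j h => by simpa [hr.ne'] using h,
      Finset.card_range]
  have hQbounds : ∀ q ∈ Q, m + 1 + r ≤ q ∧ q + r ≤ m + n := by
    simp only [Q, Finset.mem_image, Finset.mem_range]
    rintro _ ⟨j, hj, rfl⟩
    have : j * r ≤ t * r := Nat.mul_le_mul_right r (by omega)
    omega
  have hvertex : ∀ a, a = m ∨ a = m + 1 → cycIdx ℓ a ∉ Q.image (cycIdx ℓ) ∧
      charVec (insert (cycIdx ℓ a) (Q.image (cycIdx ℓ))) ∈ stabFacet n (t + 2) r ℓ := by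
    intro a ha
    have haQ : ∀ q ∈ Q, a + r ≤ q ∧ q + r ≤ a + n := fun q hq => by
      have := hQbounds q hq
      omega
    rcases hwin with hwin | ⟨j, hj, hjn, hjr⟩
    · exact charVec_insert_mem_stabFacet ℓ hQ hr (by omega) hQcard haQ (w := a) (by omega)
        ⟨a, Finset.mem_insert_self a Q, rfl⟩
    · refine charVec_insert_mem_stabFacet ℓ hQ hr (by omega) hQcard haQ (w := s + j * r - n)
        (by omega) ⟨s + j * r, Finset.mem_insert_of_mem (Finset.mem_image_of_mem _ ?_), ?_⟩
      · exact Finset.mem_range.2 (by omega)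
      · rw [← cycIdx_add_self ℓ (s + j * r - n), Nat.sub_add_cancel hjn]
  obtain ⟨hm0, hmem0⟩ := hvertex m (Or.inl rfl)
  obtain ⟨hm1, hmem1⟩ := hvertex (m + 1) (Or.inr rfl)
  have := vsub_mem_vectorSpan ℝ hmem1 hmem0
  rwa [vsub_eq_sub, charVec_insert hm0, charVec_insert hm1, add_sub_add_right_eq_sub] at this

end Vertices

section LinearAlgebra

variable {n : ℕ} (r : ℕ) (ℓ : Fin n)

def windowTotal : (Fin n → ℝ) →ₗ[ℝ] ℝ × ℝ where
  toFun x := (wSum r ℓ x, ∑ i, x i)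
  map_add' x y := by simp [wSum, Finset.sum_add_distrib]
  map_smul' c x := by simp [wSum, Finset.mul_sum]

lemma windowTotal_apply (x : Fin n → ℝ) : windowTotal r ℓ x = (wSum r ℓ x, ∑ i, x i) := rfl

lemma vectorSpan_stabFacet_le_ker (k : ℕ) :
    vectorSpan ℝ (stabFacet n k r ℓ) ≤ LinearMap.ker (windowTotal r ℓ) := by
  rw [vectorSpan_def, Submodule.span_le]
  rintro _ ⟨x, ⟨-, hx⟩, y, ⟨-, hy⟩, rfl⟩
  simp only [SetLike.mem_coe, LinearMap.mem_ker, vsub_eq_sub]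
  rw [map_sub, windowTotal_apply, windowTotal_apply, hx.1, hx.2, hy.1, hy.2, sub_self]

lemma windowTotal_single (hrn : r ≤ n) {a : ℕ} (ha : a < n) :
    windowTotal r ℓ (Pi.single (cycIdx ℓ a) 1) = (if a < r then 1 else 0, 1) := by
  rw [windowTotal_apply, wSum,
    sum_single_cycIdx ℓ _ (fun j hj => (Finset.mem_range.1 hj).trans_le hrn) ha]
  simp

lemma windowTotal_surjective (hr : 0 < r) (hrn : r < n) :
    Function.Surjective (windowTotal r ℓ) := by
  rintro ⟨c, d⟩
  refine ⟨c • Pi.single (cycIdx ℓ 0) 1 + (d - c) • Pi.single (cycIdx ℓ r) 1, ?_⟩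
  rw [map_add, map_smul, map_smul, windowTotal_single r ℓ hrn.le (show 0 < n by omega),
    windowTotal_single r ℓ hrn.le hrn, if_pos hr, if_neg (lt_irrefl r)]
  simp

lemma finrank_ker_windowTotal (hr : 0 < r) (hrn : r < n) :
    Module.finrank ℝ (LinearMap.ker (windowTotal r ℓ)) = n - 2 := by
  have h := LinearMap.finrank_range_add_finrank_ker (windowTotal r ℓ)
  rw [LinearMap.range_eq_top.2 (windowTotal_surjective r ℓ hr hrn), finrank_top] at h
  rw [Module.finrank_prod, Module.finrank_self, Module.finrank_fin_fun] at h
  omega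

end LinearAlgebra

lemma linearIndependent_single_succ_sub_single {n : ℕ} (ℓ : Fin n) (T : Finset ℕ)
    (hT : ∀ m ∈ T, m + 1 < n) :
    LinearIndependent ℝ fun m : T =>
      (Pi.single (cycIdx ℓ (m + 1)) 1 - Pi.single (cycIdx ℓ m) 1 : Fin n → ℝ) := by
  have hf : ∀ i a, a < n → (∑ j ∈ Ioo i n, LinearMap.proj (R := ℝ) (φ := fun _ => ℝ)
      (cycIdx ℓ j)) (Pi.single (cycIdx ℓ a) 1) = if a ∈ Ioo i n then 1 else 0 := by
    intro i a ha
    rw [LinearMap.sum_apply]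
    exact sum_single_cycIdx ℓ _ (fun j hj => (Finset.mem_Ioo.1 hj).2) ha
  refine .of_pairwise_dual_eq_zero_one _
    (fun i : T => ∑ j ∈ Ioo (i : ℕ) n, LinearMap.proj (cycIdx ℓ j)) (fun i j hij => ?_) fun i => ?_
  · have := hT j j.2
    have hij : (i : ℕ) ≠ j := Subtype.coe_ne_coe.2 hij
    dsimp only
    rw [map_sub, hf _ _ this, hf _ _ (by omega)]
    simp only [Finset.mem_Ioo]
    split_ifs <;> first | (exfalso; omega) | simp
  · have := hT i i.2
    rw [map_sub, hf _ _ this, hf _ _ (by omega)]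
    simp [this]

lemma finrank_vectorSpan_stabFacet_le {n k r : ℕ} (ℓ : Fin n) (hr : 0 < r) (hrn : r < n) :
    Module.finrank ℝ (vectorSpan ℝ (stabFacet n k r ℓ)) ≤ n - 2 :=
  (Submodule.finrank_mono (vectorSpan_stabFacet_le_ker r ℓ k)).trans
    (finrank_ker_windowTotal r ℓ hr hrn).le

lemma le_finrank_vectorSpan_stabFacet {n r t : ℕ} (ℓ : Fin n) (hr : 0 < r)
    (hn : (t + 2) * r + 1 ≤ n) :
    n - 2 ≤ Module.finrank ℝ (vectorSpan ℝ (stabFacet n (t + 2) r ℓ)) := by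
  have hrn : r < n := by nlinarith
  set T := (range (n - 1)).erase (r - 1)
  have hT : ∀ m ∈ T, m + 1 < n := fun m hm => by
    have := Finset.mem_range.1 (Finset.mem_of_mem_erase hm)
    omega
  have hspan : Submodule.span ℝ (Set.range fun m : T =>
      (Pi.single (cycIdx ℓ (m + 1)) 1 - Pi.single (cycIdx ℓ m) 1 : Fin n → ℝ)) ≤
      vectorSpan ℝ (stabFacet n (t + 2) r ℓ) :=
    Submodule.span_le.2 <| Set.range_subset_iff.2 fun m =>
      single_sub_single_mem_vectorSpan_stabFacet ℓ hr hn (hT m m.2)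
        fun h => Finset.ne_of_mem_erase m.2 (by omega)
  calc n - 2 = T.card := by
        rw [Finset.card_erase_of_mem (Finset.mem_range.2 (by omega)), Finset.card_range]
        rfl
    _ = _ := by
      rw [finrank_span_eq_card (linearIndependent_single_succ_sub_single ℓ T hT),
        Fintype.card_coe]
    _ ≤ _ := Submodule.finrank_mono hspan

/-- for `1 < k < n-1` and either `1 ≤ r < ⌊n/k⌋` or `n = kr + 1`, every
flat `H_{ℓ,r}` (cyclic window of length `r` summing to `1`, within the hyperplane of
coordinate sum `k`) is facet-defining for the `r`-stable hypersimplex: the intersection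
has affine dimension `n - 2`. -/
theorem stmt6 (n k r : ℕ) (hk : 1 < k) (hkn : k < n - 1)
    (h : (1 ≤ r ∧ r < n / k) ∨ n = k * r + 1) (ℓ : Fin n) :
    Module.finrank ℝ (affineSpan ℝ (stabHS n k r ∩
      {x | wSum r ℓ x = 1 ∧ (∑ i, x i) = (k : ℝ)})).direction = n - 2 := by
  obtain ⟨t, rfl⟩ : ∃ t, k = t + 2 := ⟨k - 2, by omega⟩
  have hr : 0 < r := by
    rcases h with ⟨hr, -⟩ | rfl
    · exact hr
    · exact Nat.pos_of_ne_zero fun h0 => by simp [h0] at hkn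
  have hn : (t + 2) * r + 1 ≤ n := by
    rcases h with ⟨-, hlt⟩ | rfl
    · have := (Nat.le_div_iff_mul_le (by omega)).1 hlt
      nlinarith
    · rfl
  rw [direction_affineSpan]
  exact le_antisymm (finrank_vectorSpan_stabFacet_le ℓ hr (by nlinarith))
    (le_finrank_vectorSpan_stabFacet ℓ hr hn)
end

section
/- Let $n,k$ be integers with $1 < k < n-1$, let $q = \lceil n/k \rceil$, and suppose $kq - n \in \{0,1\}$. Then for every integer $1 \le r < \lfloor n/k \rfloor$, the lattice point $(1,1,\dots,1, kq-n+1) \in \mathbb{Z}^n$ (all coordinates equal to $1$ except the last, which equals $kq-n+1$) lies in the relative interior of the dilate $q \cdot \Delta_{n,k}^{stab(r)}$. -/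
/-!
Deal the `k * q = n + α` cards `0, …, k * q - 1` around the cycle, card `s` going to position
`n - 1 + s mod n`: every position receives one card, and position `n - 1` a second one when
`α = 1`. The hand of the cards congruent to `j` mod `q` consists of `k` cards whose pairwise gaps
lie between `q` and `(k - 1) * q`. As `r + α + 1 ≤ q`, any gap between `q - 1` and
`(k - 1) * q + 1` becomes a cyclic distance of at least `r`, so the hands are `r`-stable `k`-sets,
and summing their characteristic vectors gives the target point `x ∈ q • Δ`. Moving one card of a
hand to an adjacent position keeps its gaps in that range, which shows `x ± (δᵤ - δᵤ₊₁) ∈ q • Δ`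
for consecutive positions `u, u + 1` of the deal. These `n - 1` directions span the hyperplane
`∑ xᵢ = k * q` containing `q • Δ`, so `x` lies in its relative interior.
-/

open Finset
open scoped Pointwise

theorem Convex.add_smul_mem_of_abs_le {E : Type*} [AddCommGroup E] [Module ℝ E] {C : Set E}
    (hC : Convex ℝ C) {x v : E} (hadd : x + v ∈ C) (hsub : x - v ∈ C) {t : ℝ} (ht : |t| ≤ 1) :
    x + t • v ∈ C := by
  obtain ⟨ht₁, ht₂⟩ := abs_le.mp ht
  convert hC.add_smul_sub_mem hsub hadd (t := (1 + t) / 2) ⟨by linarith, by linarith⟩ using 1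
  module

theorem Convex.sum_mem_card_smul {E ι : Type*} [AddCommGroup E] [Module ℝ E] {C : Set E}
    (hC : Convex ℝ C) {t : Finset ι} (ht : t.Nonempty) {z : ι → E} (hz : ∀ i ∈ t, z i ∈ C) :
    ∑ i ∈ t, z i ∈ (#t : ℝ) • C := by
  have hcard : (#t : ℝ) ≠ 0 := Nat.cast_ne_zero.mpr ht.card_pos.ne'
  refine ⟨(#t : ℝ)⁻¹ • ∑ i ∈ t, z i, ?_, smul_inv_smul₀ hcard _⟩
  rw [smul_sum]
  exact hC.sum_mem (fun _ _ => by positivity) (by simp [hcard]) hz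

theorem exists_linearMap_sum_smul_eq_of_mem_span {K E ι : Type*} [Field K] [AddCommGroup E]
    [Module K E] [Fintype ι] (e : ι → E) :
    ∃ c : E →ₗ[K] ι → K, ∀ d ∈ Submodule.span K (Set.range e), ∑ i, c d i • e i = d := by
  set L := Fintype.linearCombination K e
  obtain ⟨g, hg⟩ := L.rangeRestrict.exists_rightInverse_of_surjective L.range_rangeRestrict
  obtain ⟨c, hc⟩ := LinearMap.exists_extend g
  refine ⟨c, fun d hd => ?_⟩
  rw [← Fintype.range_linearCombination] at hd
  have hcd : c d = g ⟨d, hd⟩ := LinearMap.congr_fun hc ⟨d, hd⟩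
  have hLg : L (g ⟨d, hd⟩) = d := congrArg Subtype.val (LinearMap.congr_fun hg ⟨d, hd⟩)
  rw [hcd]
  simpa only [L, Fintype.linearCombination_apply] using hLg

/- Writing `y - x = ∑ cᵢ eᵢ` with coordinates `cᵢ` depending linearly (hence continuously) on `y`,
`y` is the average of `x` and the points `x + (N cᵢ) eᵢ`, which lie in `C` once `|N cᵢ| ≤ 1`. -/
theorem Convex.mem_intrinsicInterior_of_add_mem_of_sub_mem {E ι : Type*} [NormedAddCommGroup E]
    [NormedSpace ℝ E] [FiniteDimensional ℝ E] [Fintype ι] {C : Set E} (hC : Convex ℝ C) {x : E}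
    (hx : x ∈ C) {e : ι → E} (hadd : ∀ i, x + e i ∈ C) (hsub : ∀ i, x - e i ∈ C)
    (hspan : (affineSpan ℝ C).direction ≤ Submodule.span ℝ (Set.range e)) :
    x ∈ intrinsicInterior ℝ C := by
  obtain ⟨c, hc⟩ := exists_linearMap_sum_smul_eq_of_mem_span (K := ℝ) e
  set N : ℝ := Fintype.card ι + 1
  have hN : 0 < N := by positivity
  have hxA : x ∈ affineSpan ℝ C := subset_affineSpan ℝ C hx
  refine mem_intrinsicInterior.2 ⟨⟨x, hxA⟩, ?_, rfl⟩
  rw [mem_interior_iff_mem_nhds, mem_nhds_subtype]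
  refine ⟨{y | ‖c (y - x)‖ < N⁻¹}, ?_, ?_⟩
  · refine IsOpen.mem_nhds (isOpen_lt ?_ continuous_const) (by simpa using hN)
    exact continuous_norm.comp ((LinearMap.continuous_of_finiteDimensional c).comp
      (continuous_id.sub continuous_const))
  rintro ⟨y, hy⟩ hyU
  simp only [Set.mem_preimage, Set.mem_ofPred_eq] at hyU ⊢
  have hd : ∑ i, c (y - x) i • e i = y - x :=
    hc _ (hspan (AffineSubspace.vsub_mem_direction hy hxA))
  have hcoord : ∀ i, |N * c (y - x) i| ≤ 1 := fun i => by
    rw [abs_mul, abs_of_pos hN, ← le_div_iff₀' hN, one_div]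
    exact ((norm_le_pi_norm (c (y - x)) i).trans_lt hyU).le
  have hy_eq : y = ∑ o : Option ι, N⁻¹ • o.elim x (fun i => x + (N * c (y - x) i) • e i) := by
    rw [Fintype.sum_option]
    simp only [Option.elim_none, Option.elim_some, smul_add, Finset.sum_add_distrib, smul_smul,
      ← mul_assoc, inv_mul_cancel₀ hN.ne', one_mul, hd, Finset.sum_const, Finset.card_univ]
    rw [← add_assoc, ← succ_nsmul', ← Nat.cast_smul_eq_nsmul ℝ, smul_smul, Nat.cast_succ,
      mul_inv_cancel₀ hN.ne', one_smul, add_sub_cancel]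
  rw [hy_eq]
  refine hC.sum_mem (fun _ _ => by positivity) ?_ fun o _ => ?_
  · rw [Finset.sum_const, Finset.card_univ, Fintype.card_option, nsmul_eq_mul, Nat.cast_succ,
      mul_inv_cancel₀ hN.ne']
  · cases o with
    | none => exact hx
    | some i => exact hC.add_smul_mem_of_abs_le (hadd i) (hsub i) (hcoord i)

theorem sum_eq_zero_of_mem_direction_affineSpan {ι : Type*} [Fintype ι] {C : Set (ι → ℝ)}
    {c : ℝ} (hC : ∀ x ∈ C, ∑ i, x i = c) {d : ι → ℝ} (hd : d ∈ (affineSpan ℝ C).direction) :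
    ∑ i, d i = 0 := by
  rw [direction_affineSpan, vectorSpan_def] at hd
  induction hd using Submodule.span_induction with
  | mem d hd =>
    obtain ⟨x, hx, y, hy, rfl⟩ := hd
    simp [Finset.sum_sub_distrib, hC x hx, hC y hy]
  | zero => simp
  | add d d' _ _ h h' => simp [Finset.sum_add_distrib, h, h']
  | smul a d _ h => simp [← Finset.mul_sum, h]

def IsSpaced (S : Finset ℕ) (a b : ℕ) : Prop :=
  ∀ s ∈ S, ∀ t ∈ S, s < t → a ≤ t - s ∧ t - s ≤ b

namespace IsSpaced

variable {S : Finset ℕ} {a b : ℕ}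

theorem mono (hS : IsSpaced S a b) {a' b' : ℕ} (ha : a' ≤ a) (hb : b ≤ b') :
    IsSpaced S a' b' := fun s hs t ht hst => by
  have := hS s hs t ht hst
  omega

theorem dist_mem_Icc (hS : IsSpaced S a b) {s t : ℕ} (hs : s ∈ S) (ht : t ∈ S) (hst : s ≠ t) :
    a ≤ max s t - min s t ∧ max s t - min s t ≤ b := by
  rcases hst.lt_or_gt with h | h
  · have := hS s hs t ht h
    omega
  · have := hS t ht s hs h
    omega

theorem notMem_of_adj (hS : IsSpaced S a b) (ha : 2 ≤ a) {x y : ℕ} (hy : y ∈ S)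
    (hxy : x + 1 = y ∨ y + 1 = x) : x ∉ S := fun hx => by
  have := hS.dist_mem_Icc hx hy (by omega)
  omega

theorem insert_erase (hS : IsSpaced S a b) {x y : ℕ} (hy : y ∈ S)
    (hxy : x + 1 = y ∨ y + 1 = x) : IsSpaced (insert x (S.erase y)) (a - 1) (b + 1) := by
  intro s hs t ht hst
  simp only [mem_insert, mem_erase] at hs ht
  rcases hs with rfl | ⟨hsy, hs⟩ <;> rcases ht with rfl | ⟨hty, ht⟩
  · omega
  · have := hS.dist_mem_Icc hy ht (Ne.symm hty)
    omega
  · have := hS.dist_mem_Icc hs hy hsy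
    omega
  · have := hS s hs t ht hst
    omega

end IsSpaced

def hand (k q j : ℕ) : Finset ℕ := {s ∈ range (k * q) | s % q = j}

theorem card_hand {k q j : ℕ} (hj : j < q) : #(hand k q j) = k := by
  have h := Nat.count_modEq_card (k * q) (by omega : 0 < q) j
  rw [Nat.count_eq_card_filter_range, Nat.mod_eq_of_lt hj, Nat.mul_mod_left,
    Nat.mul_div_cancel _ (by omega)] at h
  simpa [hand, Nat.ModEq, Nat.mod_eq_of_lt hj] using h

theorem isSpaced_hand (k q j : ℕ) : IsSpaced (hand k q j) q ((k - 1) * q) := by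
  intro s hs t ht hst
  simp only [hand, mem_filter, mem_range] at hs ht
  obtain ⟨c, hc⟩ : q ∣ t - s := (Nat.modEq_iff_dvd' hst.le).mp (hs.2.trans ht.2.symm)
  have hc₁ : 1 ≤ c := Nat.pos_of_ne_zero (by rintro rfl; omega)
  have hck : c < k := Nat.lt_of_mul_lt_mul_left (a := q) (by rw [← hc, mul_comm q k]; omega)
  rw [hc, mul_comm (k - 1)]
  exact ⟨Nat.le_mul_of_pos_right q hc₁, Nat.mul_le_mul_left q (by omega)⟩

section CyclicDeal

open scoped Fin.NatCast

variable {n : ℕ}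

theorem cycDist_eq_min_val_sub (i j : Fin n) : cycDist i j = min (i - j).val (j - i).val := by
  have := i.isLt
  have := j.isLt
  simp only [cycDist, Fin.val_sub]
  congr 2 <;> omega

def dealVec (ℓ : Fin n) (S : Finset ℕ) : Fin n → ℝ :=
  ∑ s ∈ S, Pi.single (cycIdx ℓ s) 1

theorem charVec_eq_sum_single (I : Finset (Fin n)) : charVec I = ∑ i ∈ I, Pi.single i 1 := by
  ext x
  simp [charVec, Finset.sum_apply, Pi.single_apply]

theorem dealVec_insert_erase (ℓ : Fin n) {S : Finset ℕ} {x y : ℕ} (hx : x ∉ S) (hy : y ∈ S) :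
    dealVec ℓ (insert x (S.erase y)) =
      dealVec ℓ S + Pi.single (cycIdx ℓ x) 1 - Pi.single (cycIdx ℓ y) 1 := by
  rw [dealVec, dealVec, sum_insert fun h => hx (mem_of_mem_erase h), ← add_sum_erase S _ hy]
  abel

theorem sum_dealVec_hand (ℓ : Fin n) {k q : ℕ} (hq : 0 < q) :
    ∑ j ∈ range q, dealVec ℓ (hand k q j) = dealVec ℓ (range (k * q)) :=
  sum_fiberwise_of_maps_to (fun s _ => mem_range.mpr (Nat.mod_lt s hq)) _

theorem sum_eq_of_mem_smul_stabHS {k r : ℕ} {c : ℝ} {x : Fin n → ℝ}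
    (hx : x ∈ c • stabHS n k r) : ∑ i, x i = c * k := by
  obtain ⟨x, hx, rfl⟩ := hx
  have hlin : IsLinearMap ℝ fun x : Fin n → ℝ => ∑ i, x i :=
    ⟨fun x y => by simp [sum_add_distrib], fun c x => by simp [mul_sum]⟩
  have hsum : ∑ i, x i = k := by
    refine convexHull_min ?_ (convex_hyperplane hlin (k : ℝ)) hx
    rintro _ ⟨I, hI, rfl⟩
    simp [charVec, hI.1]
  simp only [Pi.smul_apply, smul_eq_mul, ← mul_sum, hsum]

variable [NeZero n]

theorem cycIdx_eq_add_natCast (ℓ : Fin n) (s : ℕ) : cycIdx ℓ s = ℓ + (s : Fin n) := by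
  ext
  simp [cycIdx, Fin.val_add, Fin.val_natCast, Nat.add_mod]

theorem cycIdx_self_right (ℓ : Fin n) : cycIdx ℓ n = ℓ := by
  simp [cycIdx_eq_add_natCast]

theorem exists_lt_cycIdx_eq (ℓ i : Fin n) : ∃ s < n, cycIdx ℓ s = i :=
  ⟨(i - ℓ).val, (i - ℓ).isLt, by rw [cycIdx_eq_add_natCast, Fin.cast_val_eq_self, add_sub_cancel]⟩

theorem sum_range_cycIdx {M : Type*} [AddCommMonoid M] (ℓ : Fin n) (g : Fin n → M) :
    ∑ s ∈ range n, g (cycIdx ℓ s) = ∑ i, g i := by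
  rw [← Fin.sum_univ_eq_sum_range (fun s => g (cycIdx ℓ s))]
  simp only [cycIdx_eq_add_natCast, Fin.cast_val_eq_self]
  exact Equiv.sum_comp (Equiv.addLeft ℓ) g

theorem cycDist_cycIdx_add (ℓ : Fin n) (s : ℕ) {d : ℕ} (hd : d < n) :
    cycDist (cycIdx ℓ s) (cycIdx ℓ (s + d)) = min (n - d) d := by
  rcases Nat.eq_zero_or_pos d with rfl | hd0
  · simp [cycDist]
  have hd' : (d : Fin n) ≠ 0 := by
    rw [Ne, Fin.ext_iff, Fin.val_natCast, Nat.mod_eq_of_lt hd]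
    simpa using hd0.ne'
  rw [cycDist_eq_min_val_sub, cycIdx_eq_add_natCast, cycIdx_eq_add_natCast, Nat.cast_add,
    show ℓ + s - (ℓ + (s + d)) = -(d : Fin n) by abel, add_sub_add_left_eq_sub, add_sub_cancel_left,
    Fin.val_neg, if_neg hd', Fin.val_natCast, Nat.mod_eq_of_lt hd]

theorem dealVec_range_add (ℓ : Fin n) {α : ℕ} (hα : α ≤ 1) :
    dealVec ℓ (range (n + α)) = fun i => if i = ℓ then (α + 1 : ℝ) else 1 := by
  have hrange : dealVec ℓ (range n) = 1 := by
    rw [dealVec, sum_range_cycIdx ℓ fun i => Pi.single i (1 : ℝ)]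
    exact Finset.univ_sum_single _
  ext i
  interval_cases α
  · simp [hrange]
  · rw [dealVec, sum_range_succ, ← dealVec, hrange, cycIdx_self_right]
    by_cases hi : i = ℓ <;> simp [hi]

theorem IsSpaced.le_cycDist {S : Finset ℕ} {r : ℕ} (hS : IsSpaced S r (n - r)) (ℓ : Fin n)
    {s t : ℕ} (hs : s ∈ S) (ht : t ∈ S) (hst : s < t) :
    r ≤ cycDist (cycIdx ℓ s) (cycIdx ℓ t) := by
  obtain ⟨hlo, hhi⟩ := hS s hs t ht hst
  rcases Nat.eq_zero_or_pos r with rfl | hr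
  · exact Nat.zero_le _
  obtain ⟨d, rfl⟩ := Nat.exists_eq_add_of_lt hst
  rw [add_assoc, cycDist_cycIdx_add ℓ s (by omega)]
  omega

theorem IsSpaced.injOn_cycIdx {S : Finset ℕ} {r : ℕ} (hS : IsSpaced S r (n - r)) (hr : 1 ≤ r)
    (ℓ : Fin n) : Set.InjOn (cycIdx ℓ) S := by
  have key : ∀ s ∈ S, ∀ t ∈ S, s < t → cycIdx ℓ s ≠ cycIdx ℓ t := fun s hs t ht hst h => by
    have := hS.le_cycDist ℓ hs ht hst
    simp [h, cycDist] at this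
    omega
  intro s hs t ht h
  by_contra hne
  rcases Ne.lt_or_gt hne with hst | hts
  · exact key s hs t ht hst h
  · exact key t ht s hs hts h.symm

theorem IsSpaced.isStable_image_cycIdx {S : Finset ℕ} {r : ℕ} (hS : IsSpaced S r (n - r))
    (hr : 1 ≤ r) (ℓ : Fin n) : IsStable n #S r (S.image (cycIdx ℓ)) := by
  refine ⟨card_image_of_injOn (hS.injOn_cycIdx hr ℓ), ?_⟩
  simp only [mem_image]
  rintro _ ⟨s, hs, rfl⟩ _ ⟨t, ht, rfl⟩ hne
  rcases lt_or_gt_of_ne (ne_of_apply_ne _ hne) with hst | hts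
  · exact hS.le_cycDist ℓ hs ht hst
  · rw [cycDist, min_comm]
    exact hS.le_cycDist ℓ ht hs hts

theorem sum_dealVec_mem_smul_stabHS {k q r : ℕ} (hq : 0 < q) (hr : 1 ≤ r) (ℓ : Fin n)
    {F : ℕ → Finset ℕ} (hF : ∀ j < q, #(F j) = k ∧ IsSpaced (F j) r (n - r)) :
    ∑ j ∈ range q, dealVec ℓ (F j) ∈ (q : ℝ) • stabHS n k r := by
  have h := (convex_convexHull ℝ (charVec '' {I | IsStable n k r I})).sum_mem_card_smul
    (nonempty_range_iff.mpr hq.ne') (z := fun j => dealVec ℓ (F j)) fun j hj => by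
      obtain ⟨hcard, hspaced⟩ := hF j (mem_range.mp hj)
      refine subset_convexHull ℝ _ ⟨_, hcard ▸ hspaced.isStable_image_cycIdx hr ℓ, ?_⟩
      rw [charVec_eq_sum_single, sum_image (hspaced.injOn_cycIdx hr ℓ), dealVec]
  rw [card_range] at h
  exact h

theorem mem_span_single_sub_single_of_sum_eq_zero (ℓ : Fin n)
    {d : Fin n → ℝ} (hd : ∑ i, d i = 0) :
    d ∈ Submodule.span ℝ (Set.range fun u : Fin (n - 1) =>
      (Pi.single (cycIdx ℓ u) 1 - Pi.single (cycIdx ℓ (u + 1)) 1 : Fin n → ℝ)) := by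
  set M := Submodule.span ℝ (Set.range fun u : Fin (n - 1) =>
    (Pi.single (cycIdx ℓ u) 1 - Pi.single (cycIdx ℓ (u + 1)) 1 : Fin n → ℝ))
  have hpath : ∀ v < n, Pi.single (cycIdx ℓ 0) (1 : ℝ) - Pi.single (cycIdx ℓ v) 1 ∈ M := by
    intro v hv
    induction v with
    | zero => simp
    | succ v ih =>
      have hedge : (Pi.single (cycIdx ℓ v) 1 - Pi.single (cycIdx ℓ (v + 1)) 1 : Fin n → ℝ) ∈ M :=
        Submodule.subset_span ⟨⟨v, by omega⟩, rfl⟩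
      convert add_mem (ih (by omega)) hedge using 1
      abel
  have hd' : d = ∑ i, d i • (Pi.single i 1 - Pi.single (cycIdx ℓ 0) 1) := by
    simp only [smul_sub, sum_sub_distrib, ← sum_smul, hd, zero_smul, sub_zero]
    ext i
    simp [Finset.sum_apply, Pi.single_apply]
  rw [hd']
  refine Submodule.sum_mem _ fun i _ => Submodule.smul_mem _ _ ?_
  obtain ⟨v, hv, rfl⟩ := exists_lt_cycIdx_eq ℓ i
  simpa using M.neg_mem (hpath v hv)

end CyclicDeal

section Witnesses

variable {n k q α r : ℕ} [NeZero n] (ℓ : Fin n) (hqα : k * q = n + α) (hrq : r + α + 1 ≤ q)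
  (hr : 1 ≤ r)
include hqα hrq hr

theorem dealVec_range_mem_smul_stabHS : dealVec ℓ (range (k * q)) ∈ (q : ℝ) • stabHS n k r := by
  have hsub := Nat.sub_one_mul k q
  rw [← sum_dealVec_hand ℓ (by omega)]
  exact sum_dealVec_mem_smul_stabHS (by omega) hr ℓ fun j hj =>
    ⟨card_hand hj, (isSpaced_hand k q j).mono (by omega) (by omega)⟩

theorem dealVec_range_add_single_sub_single_mem {a b : ℕ} (ha : a < n) (hb : b < n)
    (hab : a + 1 = b ∨ b + 1 = a) :
    dealVec ℓ (range (k * q)) + Pi.single (cycIdx ℓ a) 1 - Pi.single (cycIdx ℓ b) 1 ∈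
      (q : ℝ) • stabHS n k r := by
  have hsub := Nat.sub_one_mul k q
  have hkq : q ≤ k * q := Nat.le_mul_of_pos_left q (Nat.pos_of_ne_zero (by rintro rfl; omega))
  set j₀ := b % q
  have hj₀ : j₀ ∈ range q := mem_range.mpr (Nat.mod_lt b (by omega))
  have hb' : b ∈ hand k q j₀ := mem_filter.mpr ⟨mem_range.mpr (by omega), rfl⟩
  have ha' : a ∉ hand k q j₀ := (isSpaced_hand k q j₀).notMem_of_adj (by omega) hb' hab
  set S' := insert a ((hand k q j₀).erase b)
  have hsum : ∑ j ∈ range q, dealVec ℓ (Function.update (hand k q) j₀ S' j) =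
      dealVec ℓ (range (k * q)) + Pi.single (cycIdx ℓ a) 1 - Pi.single (cycIdx ℓ b) 1 := by
    rw [sum_congr rfl fun j _ => Function.apply_update (fun _ => dealVec ℓ) (hand k q) j₀ S' j,
      sum_update_of_mem hj₀, dealVec_insert_erase ℓ ha' hb', ← sum_dealVec_hand ℓ (by omega),
      sum_eq_add_sum_sdiff_singleton_of_mem hj₀]
    abel
  rw [← hsum]
  refine sum_dealVec_mem_smul_stabHS (by omega) hr ℓ fun j hj => ?_
  by_cases hj' : j = j₀
  · rw [hj', Function.update_self, card_insert_of_notMem fun h => ha' (mem_of_mem_erase h),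
      card_erase_add_one hb', card_hand (mem_range.mp hj₀)]
    exact ⟨rfl, ((isSpaced_hand k q j₀).insert_erase hb' hab).mono (by omega) (by omega)⟩
  · rw [Function.update_of_ne hj']
    exact ⟨card_hand hj, (isSpaced_hand k q j).mono (by omega) (by omega)⟩

end Witnesses

theorem stmt8_general (n k q α : ℕ) (hqα : k * q = n + α) (hα : α ≤ 1)
    (r : ℕ) (hr1 : 1 ≤ r) (hr2 : r < n / k) :
    (fun i : Fin n => if (i : ℕ) = n - 1 then (α + 1 : ℝ) else 1) ∈
      intrinsicInterior ℝ ((q : ℝ) • stabHS n k r) := by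
  have : NeZero n := ⟨by rintro rfl; simp at hr2⟩
  have hrq : r + α + 1 ≤ q := by
    have hdiv : n / k + α ≤ q := by
      interval_cases α
      · exact Nat.div_le_of_le_mul (by omega)
      · exact Nat.div_lt_of_lt_mul (by omega)
    omega
  set ℓ : Fin n := ⟨n - 1, Nat.sub_lt (NeZero.pos n) one_pos⟩
  have hX : (fun i : Fin n => if (i : ℕ) = n - 1 then (α + 1 : ℝ) else 1) =
      dealVec ℓ (range (k * q)) := by
    rw [hqα, dealVec_range_add ℓ hα]
    simp [ℓ, Fin.ext_iff]
  have hconv : Convex ℝ ((q : ℝ) • stabHS n k r) := (convex_convexHull ℝ _).smul _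
  rw [hX]
  refine hconv.mem_intrinsicInterior_of_add_mem_of_sub_mem
    (dealVec_range_mem_smul_stabHS ℓ hqα hrq hr1) (fun u => ?_) (fun u => ?_)
    fun d hd => mem_span_single_sub_single_of_sum_eq_zero ℓ
      (sum_eq_zero_of_mem_direction_affineSpan (fun _ => sum_eq_of_mem_smul_stabHS) hd)
  · rw [← add_sub_assoc]
    exact dealVec_range_add_single_sub_single_mem ℓ hqα hrq hr1 (by omega) (by omega) (Or.inl rfl)
  · rw [sub_sub_eq_add_sub]
    exact dealVec_range_add_single_sub_single_mem ℓ hqα hrq hr1 (by omega) (by omega) (Or.inr rfl)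

/-- let `q = ⌈n/k⌉` and suppose `α = kq - n ∈ {0,1}`.  Then for every
`1 ≤ r < ⌊n/k⌋`, the lattice point `(1,1,…,1, kq-n+1)` (all coordinates `1` except the
last, which is `α + 1`) lies in the relative interior of `q · Δ_{n,k}^{stab(r)}`. -/
theorem stmt8 (n k q α : ℕ) (hk : 1 < k) (hkn : k < n - 1)
    (hq : q = (n + k - 1) / k) (hqα : k * q = n + α) (hα : α ≤ 1)
    (r : ℕ) (hr1 : 1 ≤ r) (hr2 : r < n / k) :
    (fun i : Fin n => if (i : ℕ) = n - 1 then (α + 1 : ℝ) else 1) ∈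
      intrinsicInterior ℝ ((q : ℝ) • stabHS n k r) :=
  stmt8_general n k q α hqα hα r hr1 hr2
end

section
/- Let $n,k$ be integers with $1 < k < n-1$, let $q = \lceil n/k \rceil$, and suppose $\alpha := kq - n$ satisfies $2 \le \alpha \le k-1$. Set $r_0 = \lfloor n/k \rfloor - 1$. Define the point $x \in \mathbb{Z}^n$ by $x_i = 2$ if $i \in \{n - s\,r_0 : s = 1, 2, \dots, \alpha\}$ and $x_i = 1$ otherwise. Then for every integer $1 \le r < \lfloor n/k \rfloor$, the lattice point $x$ lies in the relative interior of the dilate $q \cdot \Delta_{n,k}^{stab(r)}$. -/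
open Finset
open scoped Pointwise

/-!
Put `x i` items on position `i` of the cycle and number them `0, 1, …, kq - 1` in cyclic order.
If every `r` consecutive positions carry at most `q` items, the positions carrying an item
`≡ t (mod q)` form an `r`-stable `k`-set `C t`, and `x = ∑_{t < q} 𝟙_{C t}`; so `x` lies in
`q • Δ^{stab(r)}`. For the point of the theorem `⌊n/k⌋ = q - 1`, the doubled positions are
`q - 2 ≥ r` apart, so every window of `r` positions carries at most `r + 1 ≤ q - 1` items.
Moving one item from one position to another keeps all windows at most `q`, hence
`x ± (e_j - e_0)` stay in the polytope; these directions span the hyperplane `∑ x_i = kq`,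
which contains the polytope, so `x` is in its relative interior.
-/

open Topology Filter

theorem Convex.add_sum_smul_mem {E ι : Type*} [AddCommGroup E] [Module ℝ E] [Fintype ι]
    {S : Set E} {x : E} (hS : Convex ℝ S) (hx : x ∈ S) (v : ι → E)
    (hv : ∀ i, x + v i ∈ S ∧ x - v i ∈ S) {c : ι → ℝ} (hc : ∑ i, |c i| ≤ 1) :
    x + ∑ i, c i • v i ∈ S := by
  let w : Option ι → ℝ := fun o => o.elim (1 - ∑ i, |c i|) fun i => |c i|
  let z : Option ι → E := fun o => o.elim x fun i => if 0 ≤ c i then x + v i else x - v i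
  have hcv : ∀ i, c i • v i = |c i| • (z (some i) - x) := by
    intro i
    by_cases h : 0 ≤ c i
    · simp [z, h, abs_of_nonneg h]
    · simp [z, h, abs_of_neg (not_le.mp h)]
  have hz : ∀ o, z o ∈ S := by
    rintro (_ | i)
    · exact hx
    · by_cases h : 0 ≤ c i
      · simpa [z, h] using (hv i).1
      · simpa [z, h] using (hv i).2
  convert hS.sum_mem (t := univ) (w := w) (z := z) (by rintro (_ | i) - <;> simp [w, hc])
    (by simp [w, Fintype.sum_option]) (fun o _ => hz o) using 1
  simp only [Fintype.sum_option, w, z, Option.elim, hcv, smul_sub, sum_sub_distrib, ← sum_smul]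
  module

theorem Convex.mem_intrinsicInterior_of_add_sub_mem {E ι : Type*} [NormedAddCommGroup E]
    [NormedSpace ℝ E] [Fintype ι] {S : Set E} {x : E} (hS : Convex ℝ S) (hx : x ∈ S)
    (v : ι → E) (hv : ∀ i, x + v i ∈ S ∧ x - v i ∈ S)
    (hdir : (affineSpan ℝ S).direction ≤ Submodule.span ℝ (Set.range v)) :
    x ∈ intrinsicInterior ℝ S := by
  set L := Fintype.linearCombination ℝ v
  -- coordinates `g w` of the vectors `w` of the span, continuous since the span is
  -- finite-dimensional
  obtain ⟨g, hg⟩ := L.rangeRestrict.exists_rightInverse_of_surjective L.range_rangeRestrict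
  have hxA : x ∈ affineSpan ℝ S := mem_affineSpan ℝ hx
  let disp : affineSpan ℝ S → L.range := fun z => ⟨(z : E) - x, by
    rw [Fintype.range_linearCombination]
    exact hdir (AffineSubspace.vsub_mem_direction z.2 hxA)⟩
  have hsmall : ∀ᶠ z in 𝓝 (⟨x, hxA⟩ : affineSpan ℝ S), ∑ i, |g (disp z) i| < 1 := by
    have hcont : Continuous fun z => ∑ i, |g (disp z) i| :=
      continuous_finsetSum _ fun i _ => ((continuous_apply i).comp
        ((LinearMap.continuous_of_finiteDimensional g).comp
          ((continuous_subtype_val.sub continuous_const).subtype_mk _))).abs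
    have hdisp_x : disp ⟨x, hxA⟩ = 0 := Subtype.ext (sub_self x)
    refine Tendsto.eventually_lt_const (v := 0) one_pos ?_
    simpa [hdisp_x] using hcont.tendsto ⟨x, hxA⟩
  refine ⟨⟨x, hxA⟩, mem_interior_iff_mem_nhds.2 ?_, rfl⟩
  filter_upwards [hsmall] with z hz
  have hz_eq : (z : E) = x + ∑ i, g (disp z) i • v i := by
    have hL : L (g (disp z)) = (z : E) - x :=
      congrArg Subtype.val (LinearMap.congr_fun hg (disp z))
    rw [← Fintype.linearCombination_apply ℝ, hL, add_sub_cancel]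
  show (z : E) ∈ S
  rw [hz_eq]
  exact hS.add_sum_smul_mem hx v hv hz.le

lemma mem_span_single_sub_single {ι : Type*} [Fintype ι] [DecidableEq ι] (i₀ : ι) {d : ι → ℝ}
    (hd : ∑ i, d i = 0) :
    d ∈ Submodule.span ℝ (Set.range fun i => Pi.single i 1 - Pi.single i₀ 1) := by
  have : d = ∑ i, d i • (Pi.single i 1 - Pi.single i₀ 1 : ι → ℝ) := by
    simp only [smul_sub, sum_sub_distrib, ← sum_smul, hd, zero_smul, sub_zero]
    ext j
    simp [Pi.single_apply]
  rw [this]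
  exact Submodule.sum_mem _ fun i _ => Submodule.smul_mem _ _ (Submodule.subset_span ⟨i, rfl⟩)

lemma add_le_of_mod_eq_of_lt {a b q : ℕ} (hab : a % q = b % q) (hlt : a < b) : a + q ≤ b := by
  have := Nat.le_of_dvd (Nat.sub_pos_of_lt hlt) ((Nat.modEq_iff_dvd' hlt.le).1 hab)
  omega

section Cycle

variable {n : ℕ}

lemma cycIdx_zero_s9 (p : Fin n) : cycIdx p 0 = p :=
  Fin.ext (Nat.mod_eq_of_lt p.2)

lemma cycIdx_cycIdx (p : Fin n) (a b : ℕ) : cycIdx (cycIdx p a) b = cycIdx p (a + b) :=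
  Fin.ext (by simp [cycIdx, Nat.add_assoc])

lemma cycIdx_ne_self_s9 (p : Fin n) {ℓ : ℕ} (h0 : 0 < ℓ) (hℓ : ℓ < n) : cycIdx p ℓ ≠ p := by
  intro h
  have hmod : p.val + ℓ ≡ p.val + 0 [MOD n] :=
    (congrArg Fin.val h).trans (Nat.mod_eq_of_lt p.2).symm
  have := Nat.ModEq.add_left_cancel' _ hmod
  rw [Nat.ModEq, Nat.mod_eq_of_lt hℓ, Nat.zero_mod] at this
  omega

lemma cycIdx_sub (p p' : Fin n) : cycIdx p ((p'.val + n - p.val) % n) = p' := by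
  apply Fin.ext
  simp only [cycIdx, Nat.add_mod_mod]
  rw [show p.val + (p'.val + n - p.val) = p'.val + n by omega, Nat.add_mod_right,
    Nat.mod_eq_of_lt p'.2]

lemma le_cycDist {r : ℕ} {i j : Fin n} (hij : ∀ ℓ < r, cycIdx i ℓ ≠ j)
    (hji : ∀ ℓ < r, cycIdx j ℓ ≠ i) : r ≤ cycDist i j :=
  le_min (not_lt.1 fun h => hji _ h (cycIdx_sub j i)) (not_lt.1 fun h => hij _ h (cycIdx_sub i j))

lemma card_filter_cycIdx_mem_le_one {D : Finset (Fin n)} {r : ℕ}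
    (hD : ∀ u ∈ D, ∀ ℓ, 0 < ℓ → ℓ < r → cycIdx u ℓ ∉ D) (p : Fin n) :
    #{i ∈ range r | cycIdx p i ∈ D} ≤ 1 := by
  have key : ∀ i j, i < j → j < r → cycIdx p i ∈ D → cycIdx p j ∉ D := fun i j hij hj hi => by
    simpa [cycIdx_cycIdx, Nat.add_sub_cancel' hij.le] using
      hD _ hi (j - i) (Nat.sub_pos_of_lt hij) (by omega)
  refine card_le_one.2 fun i hi j hj => ?_
  simp only [mem_filter, mem_range] at hi hj
  rcases lt_trichotomy i j with h | h | h
  · exact absurd hj.2 (key i j h hj.1 hi.2)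
  · exact h
  · exact absurd hi.2 (key j i h hi.1 hj.2)

end Cycle

section Decomposition

variable {n : ℕ} [NeZero n] (y : Fin n → ℕ)

/- Position `p` carries `y p` items, numbered consecutively; positions are read modulo `n`, so
`block y m` is the set of numbers of the items on position `m`. -/
def cumSum (m : ℕ) : ℕ := ∑ i ∈ range m, y (Fin.ofNat n i)

def block (m : ℕ) : Finset ℕ := Ico (cumSum y m) (cumSum y (m + 1))

def residueClass (q t : ℕ) : Finset (Fin n) := {p | ∃ a ∈ block y p, a % q = t}

variable {y}

lemma cumSum_succ (m : ℕ) : cumSum y (m + 1) = cumSum y m + y (Fin.ofNat n m) :=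
  sum_range_succ _ _

lemma cumSum_mono : Monotone (cumSum y) := fun _ _ h => sum_le_sum_of_subset (range_mono h)

lemma card_block (m : ℕ) : #(block y m) = y (Fin.ofNat n m) := by
  simp [block, cumSum_succ]

lemma cumSum_add (p : Fin n) (L : ℕ) :
    cumSum y (p + L) = cumSum y p + ∑ i ∈ range L, y (cycIdx p i) :=
  sum_range_add _ _ _

lemma cumSum_self : cumSum y n = ∑ p, y p := by
  rw [cumSum, ← Fin.sum_univ_eq_sum_range (fun i => y (Fin.ofNat n i))]
  simp only [Fin.ofNat_val_eq_self]

lemma cumSum_add_self (m : ℕ) : cumSum y (n + m) = ∑ p, y p + cumSum y m := by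
  rw [cumSum, sum_range_add, ← cumSum, cumSum_self]
  congr 1
  refine sum_congr rfl fun i _ => congrArg y (Fin.ext ?_)
  simp

lemma cumSum_modEq {q : ℕ} (hq : q ∣ ∑ p, y p) (m : ℕ) :
    cumSum y m ≡ cumSum y (m % n) [MOD q] := by
  induction m using Nat.strong_induction_on with
  | _ m ih =>
    rcases lt_or_ge m n with h | h
    · rw [Nat.mod_eq_of_lt h]
    · obtain ⟨m, rfl⟩ := Nat.exists_eq_add_of_le h
      rw [cumSum_add_self, Nat.add_mod_left]
      calc ∑ p, y p + cumSum y m ≡ 0 + cumSum y m [MOD q] :=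
            (Nat.modEq_zero_iff_dvd.2 hq).add_right _
        _ ≡ cumSum y (m % n) [MOD q] := by
            rw [zero_add]; exact ih m (by have := NeZero.pos n; omega)

lemma mem_residueClass {q t : ℕ} {p : Fin n} :
    p ∈ residueClass y q t ↔ ∃ a ∈ block y p, a % q = t := by
  simp [residueClass]

lemma card_filter_block_le_one {q : ℕ} (t m : ℕ) (hyq : y (Fin.ofNat n m) ≤ q) :
    #{a ∈ block y m | a % q = t} ≤ 1 := by
  have hlen := cumSum_succ (y := y) m
  refine card_le_one.2 fun a ha b hb => ?_
  simp only [block, mem_filter, mem_Ico] at ha hb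
  rcases lt_trichotomy a b with h | h | h
  · have := add_le_of_mod_eq_of_lt (ha.2.trans hb.2.symm) h; omega
  · exact h
  · have := add_le_of_mod_eq_of_lt (hb.2.trans ha.2.symm) h; omega

lemma ite_mem_residueClass {q : ℕ} (t : ℕ) (hyq : ∀ p, y p ≤ q) (p : Fin n) :
    (if p ∈ residueClass y q t then 1 else 0) = #{a ∈ block y p | a % q = t} := by
  have hle := card_filter_block_le_one (y := y) (q := q) t p
    (by rw [Fin.ofNat_val_eq_self]; exact hyq p)
  have hpos : p ∈ residueClass y q t ↔ 0 < #{a ∈ block y p | a % q = t} := by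
    rw [mem_residueClass, card_pos, filter_nonempty_iff]
  split_ifs with h
  · have := hpos.1 h; omega
  · have := hpos.not.1 h; omega

lemma sum_card_filter_block (q t m : ℕ) :
    ∑ j ∈ range m, #{a ∈ block y j | a % q = t} = #{a ∈ range (cumSum y m) | a % q = t} := by
  induction m with
  | zero => simp [cumSum]
  | succ m ih =>
    rw [sum_range_succ, ih, card_filter, card_filter, card_filter, range_eq_Ico, range_eq_Ico,
      block, sum_Ico_consecutive _ (Nat.zero_le _) (cumSum_mono m.le_succ)]

lemma card_residueClass {k q t : ℕ} (hsum : ∑ p, y p = k * q) (hyq : ∀ p, y p ≤ q)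
    (ht : t < q) :
    #(residueClass y q t) = k := by
  calc #(residueClass y q t)
      = ∑ p, if p ∈ residueClass y q t then 1 else 0 := by simp
    _ = ∑ j ∈ range n, #{a ∈ block y j | a % q = t} := by
        rw [← Fin.sum_univ_eq_sum_range (fun j => #{a ∈ block y j | a % q = t})]
        exact sum_congr rfl fun p _ => ite_mem_residueClass t hyq p
    _ = k := by
        have hq : 0 < q := Nat.zero_lt_of_lt ht
        rw [sum_card_filter_block, cumSum_self, hsum, ← Nat.count_eq_card_filter_range]
        simpa [Nat.ModEq, Nat.mod_eq_of_lt ht, Nat.mul_div_cancel _ hq] using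
          Nat.count_modEq_card (k * q) hq t

lemma sum_charVec_residueClass {q : ℕ} (hq : 0 < q) (hyq : ∀ p, y p ≤ q) (p : Fin n) :
    ∑ t ∈ range q, charVec (residueClass y q t) p = y p := by
  have : ∑ t ∈ range q, #{a ∈ block y p | a % q = t} = y p := by
    rw [← card_eq_sum_card_fiberwise fun a _ => mem_range.2 (Nat.mod_lt a hq), card_block,
      Fin.ofNat_val_eq_self]
  rw [← this, Nat.cast_sum]
  refine sum_congr rfl fun t _ => ?_
  rw [charVec, ← ite_mem_residueClass t hyq p]
  push_cast
  rfl

lemma cycIdx_notMem_residueClass {q r t : ℕ} (hq : q ∣ ∑ p, y p) {p : Fin n}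
    (hwin : ∑ i ∈ range r, y (cycIdx p i) ≤ q) (hp : p ∈ residueClass y q t) {ℓ : ℕ}
    (hℓ : 0 < ℓ) (hℓr : ℓ < r) : cycIdx p ℓ ∉ residueClass y q t := by
  intro hp'
  obtain ⟨a, ha, hat⟩ := mem_residueClass.1 hp
  obtain ⟨b, hb, hbt⟩ := mem_residueClass.1 hp'
  simp only [block, mem_Ico] at ha hb
  set p' := cycIdx p ℓ
  -- the item `b` of `p'`, read in the block of the unreduced position `p + ℓ`
  set b' := cumSum y (p + ℓ) + (b - cumSum y p')
  have hb' : b' < cumSum y (p + ℓ + 1) := by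
    have hy : y (Fin.ofNat n (p + ℓ)) = y (Fin.ofNat n p') :=
      congrArg y (Fin.ext (by simp [p', cycIdx]))
    have := cumSum_succ (y := y) p'
    rw [cumSum_succ, hy]
    omega
  have hb't : b' % q = t := by
    rw [← hbt]
    refine ((cumSum_modEq hq _).add_right _).trans ?_
    change cumSum y p' + (b - cumSum y p') ≡ b [MOD q]
    rw [Nat.add_sub_cancel' hb.1]
  have hab : a + q ≤ b' := by
    refine add_le_of_mod_eq_of_lt (hat.trans hb't.symm) ?_
    have := cumSum_mono (y := y) (show (p : ℕ) + 1 ≤ p + ℓ by omega)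
    omega
  have hwin' := cumSum_mono (y := y) (show (p : ℕ) + ℓ + 1 ≤ p + r by omega)
  rw [cumSum_add] at hwin'
  omega

lemma isStable_residueClass {k q r t : ℕ} (hsum : ∑ p, y p = k * q) (hyq : ∀ p, y p ≤ q)
    (hwin : ∀ p, ∑ i ∈ range r, y (cycIdx p i) ≤ q) (ht : t < q) :
    IsStable n k r (residueClass y q t) := by
  have hq : q ∣ ∑ p, y p := hsum ▸ dvd_mul_left q k
  have hshort : ∀ i ∈ residueClass y q t, ∀ j ∈ residueClass y q t, i ≠ j →
      ∀ ℓ < r, cycIdx i ℓ ≠ j := by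
    rintro i hi j hj hij ℓ hℓ rfl
    rcases Nat.eq_zero_or_pos ℓ with rfl | hℓ0
    · exact hij (cycIdx_zero_s9 i).symm
    · exact cycIdx_notMem_residueClass hq (hwin i) hi hℓ0 hℓ hj
  exact ⟨card_residueClass hsum hyq ht, fun i hi j hj hij =>
    le_cycDist (hshort i hi j hj hij) (hshort j hj i hi hij.symm)⟩

theorem natCast_mem_smul_stabHS {k q r : ℕ} (hq : 0 < q) (hr : 0 < r)
    (hsum : ∑ p, y p = k * q) (hwin : ∀ p, ∑ i ∈ range r, y (cycIdx p i) ≤ q) :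
    (fun p => (y p : ℝ)) ∈ (q : ℝ) • stabHS n k r := by
  have hyq : ∀ p, y p ≤ q := fun p => by
    simpa [cycIdx_zero_s9] using (single_le_sum (fun i _ => Nat.zero_le _)
      (mem_range.2 hr)).trans (hwin p)
  have hy : (fun p => (y p : ℝ)) =
      (q : ℝ) • ∑ t ∈ range q, (q : ℝ)⁻¹ • charVec (residueClass y q t) := by
    ext p
    simp [Finset.sum_apply, ← mul_sum, sum_charVec_residueClass hq hyq, hq.ne']
  rw [hy]
  refine Set.smul_mem_smul_set ((convex_convexHull ℝ _).sum_mem (fun _ _ => by positivity)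
    (by simp [hq.ne']) fun t ht => subset_convexHull ℝ _ ⟨_, ?_, rfl⟩)
  exact isStable_residueClass hsum hyq hwin (mem_range.1 ht)

end Decomposition

section RelativeInterior

variable {n : ℕ} [NeZero n]

lemma direction_affineSpan_smul_stabHS_le (k q r : ℕ) :
    (affineSpan ℝ ((q : ℝ) • stabHS n k r)).direction ≤
      Submodule.span ℝ (Set.range fun i : Fin n => Pi.single i 1 - Pi.single 0 1) := by
  rw [stabHS, ← convexHull_smul, affineSpan_convexHull, direction_affineSpan, vectorSpan_def,
    Submodule.span_le]
  rintro _ ⟨_, ⟨_, ⟨I, hI, rfl⟩, rfl⟩, _, ⟨_, ⟨J, hJ, rfl⟩, rfl⟩, rfl⟩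
  apply mem_span_single_sub_single
  simp [charVec, hI.1, hJ.1]

lemma natCast_add_single_sub_single_mem_smul_stabHS {y : Fin n → ℕ} {k q r : ℕ} (hr : 0 < r)
    (hrn : r ≤ n) (hsum : ∑ p, y p = k * q) (hwin : ∀ p, ∑ i ∈ range r, y (cycIdx p i) < q)
    {i : Fin n} (hi : 0 < y i) (j : Fin n) :
    (fun p => (y p : ℝ)) + Pi.single j 1 - Pi.single i 1 ∈ (q : ℝ) • stabHS n k r := by
  let z : Fin n → ℕ := fun p => y p + (Pi.single j 1 : Fin n → ℕ) p - (Pi.single i 1 : Fin n → ℕ) p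
  have hz : (fun p => (z p : ℝ)) = (fun p => (y p : ℝ)) + Pi.single j 1 - Pi.single i 1 := by
    ext p
    rcases eq_or_ne p i with rfl | hpi <;> rcases eq_or_ne p j with rfl | hpj <;>
      simp [z, *]
  rw [← hz]
  refine natCast_mem_smul_stabHS (Nat.zero_lt_of_lt (hwin 0)) hr ?_ fun p => ?_
  · have hz_sum : (∑ p, z p : ℝ) = ∑ p, (y p : ℝ) := by
      simpa [sum_sub_distrib, sum_add_distrib] using congrArg (fun w => ∑ p, w p) hz
    rw [← hsum]
    exact_mod_cast hz_sum
  · have hj : #{l ∈ range r | cycIdx p l ∈ ({j} : Finset (Fin n))} ≤ 1 :=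
      card_filter_cycIdx_mem_le_one (by
        simpa using fun ℓ h0 hℓ => cycIdx_ne_self_s9 j h0 (hℓ.trans_le hrn)) p
    calc ∑ l ∈ range r, z (cycIdx p l)
        ≤ ∑ l ∈ range r, (y (cycIdx p l) + (Pi.single j 1 : Fin n → ℕ) (cycIdx p l)) :=
          sum_le_sum fun _ _ => Nat.sub_le _ _
      _ ≤ q := by
          rw [sum_add_distrib]
          simp only [Pi.single_apply, sum_boole, Nat.cast_id]
          simp only [mem_singleton] at hj
          have := hwin p
          omega

theorem natCast_mem_intrinsicInterior_smul_stabHS {y : Fin n → ℕ} {k q r : ℕ} (hy : ∀ p, 0 < y p)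
    (hr : 0 < r) (hrn : r ≤ n) (hsum : ∑ p, y p = k * q)
    (hwin : ∀ p, ∑ i ∈ range r, y (cycIdx p i) < q) :
    (fun p => (y p : ℝ)) ∈ intrinsicInterior ℝ ((q : ℝ) • stabHS n k r) := by
  refine ((convex_convexHull ℝ _).smul _).mem_intrinsicInterior_of_add_sub_mem
    (natCast_mem_smul_stabHS (Nat.zero_lt_of_lt (hwin 0)) hr hsum fun p => (hwin p).le)
    (fun j : Fin n => Pi.single j 1 - Pi.single 0 1) (fun j => ⟨?_, ?_⟩)
    (direction_affineSpan_smul_stabHS_le k q r)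
  · rw [← add_sub_assoc]
    exact natCast_add_single_sub_single_mem_smul_stabHS hr hrn hsum hwin (hy 0) j
  · rw [sub_sub_eq_add_sub]
    exact natCast_add_single_sub_single_mem_smul_stabHS hr hrn hsum hwin (hy j) 0

theorem one_add_indicator_mem_intrinsicInterior_smul_stabHS {D : Finset (Fin n)} {k q r : ℕ}
    (hD : ∀ u ∈ D, ∀ ℓ, 0 < ℓ → ℓ < r → cycIdx u ℓ ∉ D) (hr : 0 < r) (hrn : r ≤ n)
    (hrq : r + 1 < q) (hsum : n + #D = k * q) :
    (fun p => ((1 + if p ∈ D then 1 else 0 : ℕ) : ℝ)) ∈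
      intrinsicInterior ℝ ((q : ℝ) • stabHS n k r) := by
  refine natCast_mem_intrinsicInterior_smul_stabHS (fun _ => by omega) hr hrn ?_ fun p => ?_
  · simpa [sum_add_distrib, sum_boole] using hsum
  · have := card_filter_cycIdx_mem_le_one hD p
    simp only [sum_add_distrib, sum_const, card_range, smul_eq_mul, mul_one, sum_boole,
      Nat.cast_id]
    omega

end RelativeInterior

section SpacedPositions

open scoped Classical in
noncomputable def spacedPositions (n α d : ℕ) : Finset (Fin n) :=
  {i | ∃ s, 1 ≤ s ∧ s ≤ α ∧ (i : ℕ) + 1 = n - s * d}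

variable {n α d : ℕ}

lemma mem_spacedPositions {i : Fin n} :
    i ∈ spacedPositions n α d ↔ ∃ s, 1 ≤ s ∧ s ≤ α ∧ (i : ℕ) + 1 = n - s * d := by
  simp [spacedPositions]

lemma card_spacedPositions (hd : 0 < d) (hαd : α * d < n) : #(spacedPositions n α d) = α := by
  have hpos : ∀ s ≤ α, s * d < n := fun s hs => (Nat.mul_le_mul_right d hs).trans_lt hαd
  have himage : spacedPositions n α d =
      (Icc 1 α).image fun s => (⟨n - s * d - 1, by omega⟩ : Fin n) := by
    ext i
    simp only [mem_spacedPositions, mem_image, mem_Icc, Fin.ext_iff]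
    constructor
    · rintro ⟨s, hs1, hsα, hs⟩
      exact ⟨s, ⟨hs1, hsα⟩, by omega⟩
    · rintro ⟨s, ⟨hs1, hsα⟩, hs⟩
      exact ⟨s, hs1, hsα, by have := hpos s hsα; omega⟩
  rw [himage, card_image_of_injOn, Nat.card_Icc, Nat.add_sub_cancel]
  intro s hs s' hs' h
  simp only [coe_Icc, Set.mem_Icc, Fin.mk.injEq] at hs hs' h
  have := hpos s hs.2
  have := hpos s' hs'.2
  exact Nat.eq_of_mul_eq_mul_right hd (by omega)

lemma cycIdx_notMem_spacedPositions {u : Fin n} (hu : u ∈ spacedPositions n α d) {ℓ : ℕ}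
    (hℓ : 0 < ℓ) (hℓd : ℓ < d) : cycIdx u ℓ ∉ spacedPositions n α d := by
  rw [mem_spacedPositions] at hu ⊢
  rintro ⟨s', hs'1, -, hs'⟩
  obtain ⟨s, hs1, -, hs⟩ := hu
  have hd := Nat.le_mul_of_pos_left d hs1
  -- no wrap-around: `u + ℓ < u + s * d + 1 = n`
  rw [show (cycIdx u ℓ : ℕ) = u + ℓ from Nat.mod_eq_of_lt (by omega)] at hs'
  rcases le_or_gt s s' with hss | hss
  · have := Nat.mul_le_mul_right d hss
    omega
  · have := Nat.mul_le_mul_right d (Nat.succ_le_of_lt hss)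
    rw [Nat.succ_mul] at this
    omega

end SpacedPositions

open scoped Classical in
theorem stmt9_general (n k q α : ℕ) (hqα : k * q = n + α) (hα2 : 2 ≤ α) (hαk : α ≤ k - 1)
    (r : ℕ) (hr1 : 1 ≤ r) (hr2 : r < n / k) :
    (fun i : Fin n =>
        if ∃ s : ℕ, 1 ≤ s ∧ s ≤ α ∧ (i : ℕ) + 1 = n - s * (n / k - 1) then (2 : ℝ) else 1) ∈
      intrinsicInterior ℝ ((q : ℝ) • stabHS n k r) := by
  have hk0 : 0 < k := Nat.pos_of_ne_zero fun h => by simp [h] at hr2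
  have hq0 : 0 < q := Nat.pos_of_ne_zero fun h => by
    rw [h, Nat.mul_zero] at hqα
    simp [show n = 0 by omega] at hr2
  have hnk : n / k = q - 1 := by
    have := Nat.mul_sub_one k q
    refine Nat.div_eq_of_lt_le ?_ ?_ <;> rw [Nat.mul_comm]
    · omega
    · rw [Nat.sub_add_cancel hq0]; omega
  have hrn : r ≤ n := hr2.le.trans (Nat.div_le_self n k)
  have hαd : α * (q - 2) < n := by
    have h1 : α * (q - 2) + α * 2 = α * q := by rw [← Nat.mul_add, Nat.sub_add_cancel (by omega)]
    have h2 := Nat.mul_le_mul_right q (show α + 1 ≤ k by omega)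
    rw [Nat.succ_mul] at h2
    omega
  have : NeZero n := ⟨by omega⟩
  have hx : (fun i : Fin n =>
      if ∃ s : ℕ, 1 ≤ s ∧ s ≤ α ∧ (i : ℕ) + 1 = n - s * (n / k - 1) then (2 : ℝ) else 1) =
      fun i => ((1 + if i ∈ spacedPositions n α (q - 2) then 1 else 0 : ℕ) : ℝ) := by
    ext i
    rw [show n / k - 1 = q - 2 by omega, ← mem_spacedPositions]
    split_ifs <;> norm_num
  rw [hx]
  refine one_add_indicator_mem_intrinsicInterior_smul_stabHS
    (fun u hu ℓ hℓ hℓr => cycIdx_notMem_spacedPositions hu hℓ (by omega)) hr1 hrn (by omega) ?_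
  rw [card_spacedPositions (by omega) hαd]
  omega

open scoped Classical in
/-- let `q = ⌈n/k⌉` and suppose `α = kq - n` satisfies `2 ≤ α ≤ k-1`.
With `r₀ = ⌊n/k⌋ - 1`, the point with coordinate `2` in positions `n - s·r₀`
(`s = 1, …, α`, positions `1`-indexed) and `1` elsewhere lies in the relative interior of
`q · Δ_{n,k}^{stab(r)}` for every `1 ≤ r < ⌊n/k⌋`. -/
theorem stmt9 (n k q α : ℕ) (hk : 1 < k) (hkn : k < n - 1)
    (hq : q = (n + k - 1) / k) (hqα : k * q = n + α) (hα2 : 2 ≤ α) (hαk : α ≤ k - 1)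
    (r : ℕ) (hr1 : 1 ≤ r) (hr2 : r < n / k) :
    (fun i : Fin n =>
        if ∃ s : ℕ, 1 ≤ s ∧ s ≤ α ∧ (i : ℕ) + 1 = n - s * (n / k - 1) then (2 : ℝ) else 1) ∈
      intrinsicInterior ℝ ((q : ℝ) • stabHS n k r) :=
  stmt9_general n k q α hqα hα2 hαk r hr1 hr2
end
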